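/- arXiv:2206.06998 — 9 statements merged into one kernel-verified Lean document; each statement's English description precedes it below -/
import Mathlib

section
/- Let I be an arbitrary index set, let V be the real vector space of finitely supported functions I → ℝ, equipped with the norm ‖x‖ := Σ_{l∈I} |x(l)|. Fix an integer k ≥ 1 and parameters α_l ∈ (0,1) for each l ∈ I. For x_1, …, x_k ∈ V define Q(x_1,…,x_k) : I → ℝ by Q(x_1,…,x_k)(l) := q_{α_l}(x_1(l), …, x_k(l)). Then Q(x_1,…,x_k) is finitely supported, hence Q(x_1,…,x_k) ∈ V, and for all x_1,…,x_k, z_1,…,z_k ∈ V one has ‖Q(x_1,…,x_k) − Q(z_1,…,z_k)‖ ≤ Σ_{i=1}^k ‖x_i − z_i‖. -/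
/-- The `i`-th smallest value (1-based indexing) among `x 0, …, x (k-1)`. -/
noncomputable def sortedVal {k : ℕ} (x : Fin k → ℝ) (i : ℕ) : ℝ :=
  if h : i - 1 < k then x (Tuple.sort x ⟨i - 1, h⟩) else 0

/-- The univariate `α`-quantile `q_α(x) = (x̃_{⌈kα⌉} + x̃_{⌊kα+1⌋})/2`. -/
noncomputable def quant {k : ℕ} (α : ℝ) (x : Fin k → ℝ) : ℝ :=
  (sortedVal x ⌈(k : ℝ) * α⌉₊ + sortedVal x ⌊(k : ℝ) * α + 1⌋₊) / 2

lemma orderStat_le {k : ℕ} (x z : Fin k → ℝ) (j : Fin k) :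
    x (Tuple.sort x j) ≤ z (Tuple.sort z j) + ∑ i, |x i - z i| := by
  by_contra h
  push_neg at h
  set ε := ∑ i, |x i - z i| with hε
  have hεi : ∀ i, |x i - z i| ≤ ε := fun i =>
    Finset.single_le_sum (f := fun i => |x i - z i|) (fun i _ => abs_nonneg _) (Finset.mem_univ i)
  set A : Finset (Fin k) := (Finset.Iic j).image (Tuple.sort z) with hA
  set B : Finset (Fin k) := Finset.univ.filter (fun i => x i < x (Tuple.sort x j)) with hB
  have hAB : A ⊆ B := by
    intro i hi
    simp only [hA, Finset.mem_image, Finset.mem_Iic] at hi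
    obtain ⟨m, hm, rfl⟩ := hi
    have h1 : z (Tuple.sort z m) ≤ z (Tuple.sort z j) := Tuple.monotone_sort z hm
    have h2 : x (Tuple.sort z m) - z (Tuple.sort z m) ≤ ε :=
      (le_abs_self _).trans (hεi _)
    simp only [hB, Finset.mem_filter, Finset.mem_univ, true_and]
    linarith
  have hcardA : A.card = j.val + 1 := by
    rw [hA, Finset.card_image_of_injective _ (Tuple.sort z).injective, Fin.card_Iic]
  have hcardB : B.card ≤ j.val := by
    have hBsub : B ⊆ (Finset.Iio j).image (Tuple.sort x) := by
      intro i hi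
      simp only [hB, Finset.mem_filter, Finset.mem_univ, true_and] at hi
      simp only [Finset.mem_image, Finset.mem_Iio]
      refine ⟨(Tuple.sort x).symm i, ?_, by simp⟩
      by_contra hm
      push_neg at hm
      have := Tuple.monotone_sort x hm
      simp only [Function.comp_apply, Equiv.apply_symm_apply] at this
      exact absurd hi (not_lt.mpr this)
    calc B.card ≤ ((Finset.Iio j).image (Tuple.sort x)).card := Finset.card_le_card hBsub
      _ ≤ (Finset.Iio j).card := Finset.card_image_le
      _ = j.val := by rw [Fin.card_Iio]
  have := (hcardA ▸ Finset.card_le_card hAB).trans hcardB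
  omega

lemma sortedVal_lip {k : ℕ} (x z : Fin k → ℝ) (i : ℕ) :
    |sortedVal x i - sortedVal z i| ≤ ∑ j, |x j - z j| := by
  unfold sortedVal
  split_ifs with h
  · rw [abs_sub_le_iff]
    constructor
    · linarith [orderStat_le x z ⟨i - 1, h⟩]
    · have := orderStat_le z x ⟨i - 1, h⟩
      simp only [abs_sub_comm (z _) (x _)] at this
      linarith
  · simpa using Finset.sum_nonneg (fun j _ => abs_nonneg (x j - z j))

lemma quant_lip {k : ℕ} (α : ℝ) (x z : Fin k → ℝ) :
    |quant α x - quant α z| ≤ ∑ j, |x j - z j| := by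
  unfold quant
  have h1 := sortedVal_lip x z ⌈(k : ℝ) * α⌉₊
  have h2 := sortedVal_lip x z ⌊(k : ℝ) * α + 1⌋₊
  rw [abs_sub_le_iff] at h1 h2 ⊢
  constructor <;> · rw [div_sub_div_same, div_le_iff₀ (by norm_num : (0:ℝ) < 2)]; linarith

lemma quant_zero {k : ℕ} (α : ℝ) : quant α (fun _ : Fin k => (0 : ℝ)) = 0 := by
  unfold quant sortedVal
  split_ifs <;> norm_num

/-- Component-wise quantile with respect to a Hamel basis: on the space `I →₀ ℝ` of
finitely supported families (the coordinates in a Hamel basis), the component-wise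
quantile is finitely supported and is 1-Lipschitz for the ℓ¹-type (Hamel) norm
`‖x‖ = ∑_l |x l|`. -/
theorem stmt2 {I : Type*} (k : ℕ) (hk : 1 ≤ k) (α : I → ℝ)
    (hα : ∀ l, α l ∈ Set.Ioo (0 : ℝ) 1) :
    ∃ Q : (Fin k → (I →₀ ℝ)) → (I →₀ ℝ),
      (∀ (x : Fin k → (I →₀ ℝ)) (l : I), Q x l = quant (α l) (fun i => x i l)) ∧
      ∀ x z : Fin k → (I →₀ ℝ),
        (∑' l : I, |Q x l - Q z l|) ≤ ∑ i, ∑' l : I, |x i l - z i l| := by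
  classical
  set S : (Fin k → (I →₀ ℝ)) → Finset I :=
    fun x => Finset.univ.biUnion (fun i => (x i).support) with hS
  have hout : ∀ (x : Fin k → (I →₀ ℝ)) (l : I), l ∉ S x →
      quant (α l) (fun i => x i l) = 0 := by
    intro x l hl
    have : ∀ i, x i l = 0 := by
      intro i
      by_contra hne
      exact hl (Finset.mem_biUnion.mpr ⟨i, Finset.mem_univ i,
        Finsupp.mem_support_iff.mpr hne⟩)
    simp only [this]
    exact quant_zero _
  refine ⟨fun x => Finsupp.onFinset (S x) (fun l => quant (α l) (fun i => x i l))
    (fun l hl => by by_contra h; exact hl (hout x l h)), fun x l => rfl, ?_⟩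
  intro x z
  set T := S x ∪ S z with hT
  have hQ : ∀ l ∉ T, |quant (α l) (fun i => x i l) - quant (α l) (fun i => z i l)| = 0 := by
    intro l hl
    rw [Finset.mem_union] at hl
    push_neg at hl
    rw [hout x l hl.1, hout z l hl.2, sub_zero, abs_zero]
  have hxz : ∀ (i : Fin k), ∀ l ∉ T, |x i l - z i l| = 0 := by
    intro i l hl
    rw [Finset.mem_union] at hl
    push_neg at hl
    have h1 : x i l = 0 := by
      by_contra h
      exact hl.1 (Finset.mem_biUnion.mpr ⟨i, Finset.mem_univ i, Finsupp.mem_support_iff.mpr h⟩)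
    have h2 : z i l = 0 := by
      by_contra h
      exact hl.2 (Finset.mem_biUnion.mpr ⟨i, Finset.mem_univ i, Finsupp.mem_support_iff.mpr h⟩)
    rw [h1, h2, sub_zero, abs_zero]
  have hrhs : ∀ i : Fin k, (∑' l : I, |x i l - z i l|) = ∑ l ∈ T, |x i l - z i l| :=
    fun i => tsum_eq_sum (hxz i)
  simp only [Finsupp.onFinset_apply, hrhs]
  rw [tsum_eq_sum hQ]
  rw [Finset.sum_comm]
  exact Finset.sum_le_sum (fun l _ => quant_lip (α l) _ _)
end

section
/- Let X be a strictly convex real Banach space, u ∈ X* with ‖u‖_{X*} < 1, k ≥ 1 an integer, and x_1, …, x_k ∈ X. Assume the set of geometric quantiles of x_1,…,x_k with parameter u is nonempty. Then this set is a singleton in each of the following cases: (i) x_1, …, x_k do not lie on a straight line; (ii) x_1, …, x_k lie on a straight line {a + t·h : t ∈ ℝ} with ‖h‖ = 1, and α := (u(h) + 1)/2 satisfies α ∉ {1/k, 2/k, …, (k−1)/k}. -/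
/-- The set of geometric quantiles of `x 0, …, x (k-1)` with parameter `u`:
minimizers over `y` of `F(y) = ∑ i (‖x i − y‖ + u (x i − y))`. -/
def quantileSet {X : Type*} [NormedAddCommGroup X] [NormedSpace ℝ X] {k : ℕ}
    (u : X →L[ℝ] ℝ) (x : Fin k → X) : Set X :=
  {y : X | ∀ z : X,
    ∑ i, (‖x i - y‖ + u (x i - y)) ≤ ∑ i, (‖x i - z‖ + u (x i - z))}

/-- The points `x 0, …, x (k-1)` lie on a straight line `{a + t • h : t ∈ ℝ}`. -/
def OnLine {X : Type*} [NormedAddCommGroup X] [NormedSpace ℝ X] {k : ℕ}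
    (x : Fin k → X) : Prop :=
  ∃ a h : X, ∀ i, ∃ t : ℝ, x i = a + t • h

lemma key {X : Type*} [NormedAddCommGroup X] [NormedSpace ℝ X] [StrictConvexSpace ℝ X]
    (u : X →L[ℝ] ℝ) (hu : ‖u‖ < 1) {k : ℕ} (hk : 0 < k) (x : Fin k → X)
    {y₁ y₂ : X} (h₁ : y₁ ∈ quantileSet u x) (h₂ : y₂ ∈ quantileSet u x)
    (hne : y₁ ≠ y₂) :
    ∃ (τ : Fin k → ℝ) (m : ℕ),
      (∀ i, x i = y₁ + τ i • (y₂ - y₁)) ∧ 0 < m ∧ m < k ∧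
      (k : ℝ) * u (y₂ - y₁) = (2 * m - k) * ‖y₂ - y₁‖ ∧
      ∃ i j : Fin k, τ i ≠ τ j := by
  classical
  set v := y₂ - y₁ with hv_def
  have hv : v ≠ 0 := sub_ne_zero.mpr hne.symm
  have hvpos : 0 < ‖v‖ := norm_pos_iff.mpr hv
  have hF : ∑ i, (‖x i - y₁‖ + u (x i - y₁)) = ∑ i, (‖x i - y₂‖ + u (x i - y₂)) :=
    le_antisymm (h₁ y₂) (h₂ y₁)
  -- midpoint
  set ym := y₁ + (1/2 : ℝ) • v with hym_def
  have hmid : ∀ i, x i - ym = (1/2 : ℝ) • ((x i - y₁) + (x i - y₂)) := by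
    intro i
    rw [hym_def, hv_def]
    rw [smul_add, smul_sub, smul_sub]
    module
  have hterm : ∀ i ∈ Finset.univ, ‖x i - ym‖ + u (x i - ym) ≤
      ((‖x i - y₁‖ + u (x i - y₁)) + (‖x i - y₂‖ + u (x i - y₂))) / 2 := by
    intro i _
    rw [hmid i, norm_smul, map_smul]
    have := norm_add_le (x i - y₁) (x i - y₂)
    simp only [map_add, smul_eq_mul]
    rw [Real.norm_eq_abs]
    rw [abs_of_pos (by norm_num : (0:ℝ) < 1/2)]
    linarith
  have hsum_eq : ∑ i, (‖x i - ym‖ + u (x i - ym)) =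
      ∑ i, ((‖x i - y₁‖ + u (x i - y₁)) + (‖x i - y₂‖ + u (x i - y₂))) / 2 := by
    apply le_antisymm (Finset.sum_le_sum hterm)
    have h := h₁ ym
    calc ∑ i, ((‖x i - y₁‖ + u (x i - y₁)) + (‖x i - y₂‖ + u (x i - y₂))) / 2
        = ∑ i, (‖x i - y₁‖ + u (x i - y₁)) := by
          rw [← Finset.sum_div, Finset.sum_add_distrib, ← hF]; ring
      _ ≤ _ := h
  have hterm_eq := (Finset.sum_eq_sum_iff_of_le hterm).mp hsum_eq
  -- same ray, line
  have hline : ∀ i, ∃ t : ℝ, x i - y₁ = t • v := by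
    intro i
    have he := hterm_eq i (Finset.mem_univ i)
    have hnorm : ‖(x i - y₁) + (x i - y₂)‖ = ‖x i - y₁‖ + ‖x i - y₂‖ := by
      have h2 : ‖x i - ym‖ = (‖x i - y₁‖ + ‖x i - y₂‖) / 2 := by
        have hu2 : (u (x i - ym) : ℝ) = (u (x i - y₁) + u (x i - y₂)) / 2 := by
          rw [hmid i, map_smul]; simp [map_add]; ring
        rw [hu2] at he; linarith
      rw [hmid i, norm_smul] at h2
      rw [Real.norm_eq_abs, abs_of_pos (by norm_num : (0:ℝ) < 1/2)] at h2
      linarith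
    have hsr : SameRay ℝ (x i - y₁) (x i - y₂) := sameRay_iff_norm_add.mpr hnorm
    obtain ⟨w, α, β, hα, hβ, hαβ, ha, hb⟩ := hsr.exists_eq_smul
    have hab : (α - β) • w = v := by
      rw [hv_def, sub_smul, ← ha, ← hb]; abel
    have hαβne : α ≠ β := by
      intro hc
      apply hv
      rw [← hab, hc, sub_self, zero_smul]
    refine ⟨α / (α - β), ?_⟩
    rw [← hab, ha, smul_smul]
    congr 1
    rw [div_mul_eq_mul_div, mul_div_assoc, div_self (sub_ne_zero.mpr hαβne), mul_one]
  choose τ hτ using hline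
  have hxi : ∀ i, x i = y₁ + τ i • v := by
    intro i; rw [← hτ i]; abel
  -- sums along the line
  have hgc : ∀ c : ℝ, ∑ i, (‖x i - (y₁ + c • v)‖ + u (x i - (y₁ + c • v))) =
      ∑ i, (|τ i - c| * ‖v‖ + (τ i - c) * (u v)) := by
    intro c
    apply Finset.sum_congr rfl
    intro i _
    have hxc : x i - (y₁ + c • v) = (τ i - c) • v := by
      rw [hxi i, sub_smul]; abel
    rw [hxc, norm_smul, map_smul, Real.norm_eq_abs, smul_eq_mul]
  have hmem₁ := h₁
  have hF1 : ∑ i, (|τ i - (1:ℝ)| * ‖v‖ + (τ i - 1) * (u v)) =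
      ∑ i, (|τ i - (0:ℝ)| * ‖v‖ + (τ i - 0) * (u v)) := by
    rw [← hgc 1, ← hgc 0]
    have e1 : y₁ + (1:ℝ) • v = y₂ := by rw [hv_def, one_smul]; abel
    have e0 : y₁ + (0:ℝ) • v = y₁ := by rw [zero_smul, add_zero]
    rw [e1, e0, hF]
  -- constant on [0,1]
  have hconst : ∀ c : ℝ, 0 ≤ c → c ≤ 1 →
      ∑ i, (|τ i - c| * ‖v‖ + (τ i - c) * (u v)) =
      ∑ i, (|τ i - (0:ℝ)| * ‖v‖ + (τ i - 0) * (u v)) := by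
    intro c hc0 hc1
    apply le_antisymm
    · calc ∑ i, (|τ i - c| * ‖v‖ + (τ i - c) * (u v))
          ≤ ∑ i, ((1 - c) * (|τ i - 0| * ‖v‖ + (τ i - 0) * (u v)) +
                  c * (|τ i - 1| * ‖v‖ + (τ i - 1) * (u v))) := by
            apply Finset.sum_le_sum
            intro i _
            have habs : |τ i - c| ≤ (1 - c) * |τ i - 0| + c * |τ i - 1| := by
              have hdec : τ i - c = (1 - c) * (τ i - 0) + c * (τ i - 1) := by ring
              rw [hdec]
              calc |(1 - c) * (τ i - 0) + c * (τ i - 1)|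
                  ≤ |(1 - c) * (τ i - 0)| + |c * (τ i - 1)| := abs_add_le _ _
                _ = (1 - c) * |τ i - 0| + c * |τ i - 1| := by
                    rw [abs_mul, abs_mul, abs_of_nonneg (by linarith), abs_of_nonneg hc0]
            nlinarith [norm_nonneg v, abs_nonneg (τ i - 1), abs_nonneg (τ i - 0)]
        _ = ∑ i, (|τ i - (0:ℝ)| * ‖v‖ + (τ i - 0) * (u v)) := by
            rw [Finset.sum_add_distrib, ← Finset.mul_sum, ← Finset.mul_sum, hF1]; ring
    · rw [← hgc c, ← hgc 0]
      have e0 : y₁ + (0:ℝ) • v = y₁ := by rw [zero_smul, add_zero]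
      rw [e0]
      exact h₁ _
  -- pick the gap
  set A : Finset ℝ := insert (0:ℝ) ((Finset.univ.image τ).filter (· < 1)) with hA_def
  have hAne : A.Nonempty := ⟨0, Finset.mem_insert_self _ _⟩
  set a' := A.max' hAne with ha'_def
  have ha'0 : 0 ≤ a' := A.le_max' 0 (Finset.mem_insert_self _ _)
  have ha'1 : a' < 1 := by
    have hmem := A.max'_mem hAne
    have hall : ∀ b ∈ A, b < 1 := by
      intro b hb
      rcases Finset.mem_insert.mp hb with h | h
      · rw [h]; norm_num
      · exact (Finset.mem_filter.mp h).2
    exact hall _ hmem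
  have hτa : ∀ i, τ i < 1 → τ i ≤ a' := by
    intro i hi
    apply A.le_max'
    rw [hA_def]
    exact Finset.mem_insert_of_mem (Finset.mem_filter.mpr
      ⟨Finset.mem_image_of_mem τ (Finset.mem_univ i), hi⟩)
  set p := a' + (1 - a') / 3 with hp_def
  set q := a' + 2 * (1 - a') / 3 with hq_def
  have ha'p : a' < p := by rw [hp_def]; linarith
  have hpq : p < q := by rw [hp_def, hq_def]; linarith
  have hq1 : q < 1 := by rw [hq_def]; linarith
  have hp0 : 0 ≤ p := by linarith
  have hq0 : 0 ≤ q := by linarith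
  have hpq_eq : ∑ i, (|τ i - p| * ‖v‖ + (τ i - p) * (u v)) =
      ∑ i, (|τ i - q| * ‖v‖ + (τ i - q) * (u v)) := by
    rw [hconst p hp0 (le_of_lt (lt_trans hpq hq1)), hconst q hq0 (le_of_lt hq1)]
  -- per-term difference
  have hsplit : ∀ i ∈ Finset.univ, (|τ i - p| * ‖v‖ + (τ i - p) * (u v)) -
      (|τ i - q| * ‖v‖ + (τ i - q) * (u v)) =
      if τ i ≤ a' then (p - q) * ‖v‖ + (q - p) * (u v)
      else (q - p) * ‖v‖ + (q - p) * (u v) := by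
    intro i _
    by_cases hi : τ i ≤ a'
    · rw [if_pos hi, abs_of_nonpos (by linarith), abs_of_nonpos (by linarith)]
      ring
    · have h1i : 1 ≤ τ i := by
        by_contra hc
        push_neg at hc
        exact hi (hτa i hc)
      rw [if_neg hi, abs_of_nonneg (by linarith), abs_of_nonneg (by linarith)]
      ring
  set m := (Finset.univ.filter (fun i : Fin k => τ i ≤ a')).card with hm_def
  set m' := (Finset.univ.filter (fun i : Fin k => ¬ (τ i ≤ a'))).card with hm'_def
  have hmm' : m + m' = k := by
    rw [hm_def, hm'_def, Finset.card_filter_add_card_filter_not]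
    simp
  have hzero : (0:ℝ) = (m:ℝ) * ((p - q) * ‖v‖ + (q - p) * (u v)) +
      (m':ℝ) * ((q - p) * ‖v‖ + (q - p) * (u v)) := by
    have h1 : (0:ℝ) = ∑ i, ((|τ i - p| * ‖v‖ + (τ i - p) * (u v)) -
        (|τ i - q| * ‖v‖ + (τ i - q) * (u v))) := by
      rw [Finset.sum_sub_distrib, hpq_eq, sub_self]
    rw [Finset.sum_congr rfl hsplit] at h1
    rw [Finset.sum_ite, Finset.sum_const, Finset.sum_const] at h1
    rw [nsmul_eq_mul, nsmul_eq_mul] at h1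
    exact h1
  have hqp : 0 < q - p := by linarith
  have huvlt : |u v| < ‖v‖ := by
    calc |u v| = ‖u v‖ := (Real.norm_eq_abs _).symm
      _ ≤ ‖u‖ * ‖v‖ := u.le_opNorm v
      _ < 1 * ‖v‖ := by apply mul_lt_mul_of_pos_right hu hvpos
      _ = ‖v‖ := one_mul _
  have hmain : (k : ℝ) * u v = (2 * m - k) * ‖v‖ := by
    have hm'k : (m' : ℝ) = (k : ℝ) - m := by
      have hc : (m : ℝ) + m' = k := by exact_mod_cast hmm'
      linarith
    rw [hm'k] at hzero
    have hexp : (q - p) * ((k:ℝ) * u v - (2 * m - k) * ‖v‖) = 0 := by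
      linear_combination -hzero
    rcases mul_eq_zero.mp hexp with h | h
    · linarith
    · linarith
  have hk0 : (0:ℝ) < k := by exact_mod_cast hk
  have habs2 : |2 * (m:ℝ) - k| < k := by
    have h1 : |2 * (m:ℝ) - k| * ‖v‖ = (k:ℝ) * |u v| := by
      rw [← abs_of_nonneg (norm_nonneg v), ← abs_mul, ← hmain, abs_mul,
        abs_of_nonneg (le_of_lt hk0)]
    have h2 : (k:ℝ) * |u v| < k * ‖v‖ := by
      exact mul_lt_mul_of_pos_left huvlt hk0
    have h3 : |2 * (m:ℝ) - k| * ‖v‖ < k * ‖v‖ := by rw [h1]; exact h2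
    exact lt_of_mul_lt_mul_right h3 (norm_nonneg v)
  have habs3 := abs_lt.mp habs2
  have hm_pos : 0 < m := by
    have : (0:ℝ) < m := by linarith [habs3.1]
    exact_mod_cast this
  have hm_lt : m < k := by
    have : (m:ℝ) < k := by linarith [habs3.2]
    exact_mod_cast this
  have hm'_pos : 0 < m' := by omega
  obtain ⟨i, hi⟩ := Finset.card_pos.mp hm_pos
  obtain ⟨j, hj⟩ := Finset.card_pos.mp hm'_pos
  have hi' : τ i ≤ a' := (Finset.mem_filter.mp hi).2
  have hj' : ¬ (τ j ≤ a') := (Finset.mem_filter.mp hj).2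
  exact ⟨τ, m, hxi, hm_pos, hm_lt, hmain, i, j, by push_neg at hj'; linarith⟩

/-- In a strictly convex Banach space, a nonempty set of geometric quantiles is a
singleton if (i) the points do not lie on a straight line, or (ii) they lie on a line
with unit direction `h` and `α = (u(h)+1)/2 ∉ {1/k, …, (k−1)/k}`. -/
theorem stmt7 {X : Type*} [NormedAddCommGroup X] [NormedSpace ℝ X] [CompleteSpace X]
    [StrictConvexSpace ℝ X]
    (u : X →L[ℝ] ℝ) (hu : ‖u‖ < 1) (k : ℕ) (hk : 1 ≤ k) (x : Fin k → X)
    (hne : (quantileSet u x).Nonempty) :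
    ((¬ OnLine x) → ∃ y₀ : X, quantileSet u x = {y₀}) ∧
    (∀ a h : X, ‖h‖ = 1 → (∀ i, ∃ t : ℝ, x i = a + t • h) →
      (∀ j : ℕ, j ∈ Finset.Icc 1 (k - 1) → (u h + 1) / 2 ≠ (j : ℝ) / k) →
      ∃ y₀ : X, quantileSet u x = {y₀}) := by
  classical
  obtain ⟨y₀, hy₀⟩ := hne
  have hk' : 0 < k := hk
  constructor
  · intro hnol
    refine ⟨y₀, Set.eq_singleton_iff_unique_mem.mpr ⟨hy₀, ?_⟩⟩
    intro y hy
    by_contra hne'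
    obtain ⟨τ, m, hτ, _, _, _, _⟩ := key u hu hk' x hy₀ hy (Ne.symm hne')
    exact hnol ⟨y₀, y - y₀, fun i => ⟨τ i, hτ i⟩⟩
  · intro a h hh hxl hα
    refine ⟨y₀, Set.eq_singleton_iff_unique_mem.mpr ⟨hy₀, ?_⟩⟩
    intro y hy
    by_contra hne'
    obtain ⟨τ, m, hτ, hm0, hmk, hmain, i, j, hij⟩ := key u hu hk' x hy₀ hy (Ne.symm hne')
    choose r hr using hxl
    set v := y - y₀ with hv_def
    have hv : v ≠ 0 := sub_ne_zero.mpr hne'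
    have hτij : τ i - τ j ≠ 0 := sub_ne_zero.mpr hij
    have hvc : v = ((r i - r j) / (τ i - τ j)) • h := by
      have hd1 : x i - x j = (τ i - τ j) • v := by
        rw [hτ i, hτ j, sub_smul]; abel
      have hd2 : x i - x j = (r i - r j) • h := by
        rw [hr i, hr j, sub_smul]; abel
      have : (τ i - τ j) • v = (r i - r j) • h := by rw [← hd1, hd2]
      rw [div_eq_mul_inv, mul_comm, mul_smul, ← this, inv_smul_smul₀ hτij]
    set c := (r i - r j) / (τ i - τ j) with hc_def
    have hc : c ≠ 0 := by
      intro h0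
      apply hv
      rw [hvc, h0, zero_smul]
    have hnv : ‖v‖ = |c| := by rw [hvc, norm_smul, hh, mul_one, Real.norm_eq_abs]
    have huv : u v = c * u h := by rw [hvc, map_smul, smul_eq_mul]
    rw [huv, hnv] at hmain
    have hkR : (0:ℝ) < k := by exact_mod_cast hk'
    have hm1 : 1 ≤ m := hm0
    have hmk1 : m ≤ k - 1 := by omega
    rcases lt_or_gt_of_ne hc with hcneg | hcpos
    · -- c < 0 : u h = (k - 2m)/k, α = (k-m)/k
      have habs : |c| = -c := abs_of_neg hcneg
      rw [habs] at hmain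
      have huh : (k:ℝ) * u h = (k:ℝ) - 2 * m := by
        have h2 : c * ((k:ℝ) * u h - ((k:ℝ) - 2 * m)) = 0 := by linear_combination hmain
        rcases mul_eq_zero.mp h2 with h' | h'
        · exact absurd h' hc
        · linarith
      have hmem : k - m ∈ Finset.Icc 1 (k - 1) := by
        rw [Finset.mem_Icc]; omega
      apply hα (k - m) hmem
      have hcast : ((k - m : ℕ) : ℝ) = (k : ℝ) - m := by
        rw [Nat.cast_sub (le_of_lt hmk)]
      rw [hcast]
      field_simp
      linarith
    · -- c > 0 : u h = (2m - k)/k, α = m/k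
      have habs : |c| = c := abs_of_pos hcpos
      rw [habs] at hmain
      have huh : (k:ℝ) * u h = 2 * m - (k:ℝ) := by
        have h2 : c * ((k:ℝ) * u h - (2 * m - (k:ℝ))) = 0 := by linear_combination hmain
        rcases mul_eq_zero.mp h2 with h' | h'
        · exact absurd h' hc
        · linarith
      have hmem : m ∈ Finset.Icc 1 (k - 1) := by
        rw [Finset.mem_Icc]; omega
      apply hα m hmem
      field_simp
      linarith
end

section
/- Let X be a strictly convex real Banach space, k ≥ 1 an integer, and x_1, …, x_k ∈ X. Assume the set of geometric medians of x_1,…,x_k (minimizers over y ∈ X of Σ_{i=1}^k ‖x_i − y‖) is nonempty. Then this set is a singleton if and only if one of the following holds: (i) x_1, …, x_k do not lie on a straight line; (ii) x_1, …, x_k lie on a straight line {a + t·h : t ∈ ℝ}, say x_i = a + t_i·h, and the ⌈k/2⌉-th and (⌊k/2⌋+1)-th smallest values among t_1, …, t_k coincide (in particular this holds whenever k is odd). -/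
/-- The set of geometric medians of `x 0, …, x (k-1)`: minimizers over `y` of
`∑ i ‖x i − y‖`. -/
def medianSet {X : Type*} [NormedAddCommGroup X] {k : ℕ} (x : Fin k → X) : Set X :=
  {y : X | ∀ z : X, ∑ i, ‖x i - y‖ ≤ ∑ i, ‖x i - z‖}

open Finset

namespace Stmt8Aux

lemma sortedVal_eq {k : ℕ} (t : Fin k → ℝ) {i : ℕ} (h : i - 1 < k) :
    sortedVal t i = t (Tuple.sort t ⟨i - 1, h⟩) := dif_pos h

section OneD
variable {k : ℕ}

variable {k : ℕ}

lemma card_filter_perm (σ : Equiv.Perm (Fin k)) (P : Fin k → Prop) [DecidablePred P] :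
    #(univ.filter fun i => P (σ i)) = #(univ.filter P) := by
  refine Finset.card_bij (fun i _ => σ i) ?_ ?_ ?_
  · intro a ha; simp only [mem_filter, mem_univ, true_and] at ha ⊢; exact ha
  · intro a _ b _ h; exact σ.injective h
  · intro b hb
    refine ⟨σ.symm b, ?_, by simp⟩
    simp only [mem_filter, mem_univ, true_and, Equiv.apply_symm_apply] at hb ⊢
    exact hb

lemma count_le (c : Fin k → ℝ) (j : Fin k) :
    (j : ℕ) + 1 ≤ #(univ.filter fun i => c i ≤ c (Tuple.sort c j)) := by
  classical
  rw [← card_filter_perm (Tuple.sort c) (fun i => c i ≤ c (Tuple.sort c j))]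
  have : Finset.Iic j ⊆ univ.filter fun i => c (Tuple.sort c i) ≤ c (Tuple.sort c j) := by
    intro i hi
    simp only [mem_filter, mem_univ, true_and]
    exact Tuple.monotone_sort c (mem_Iic.mp hi)
  simpa [Fin.card_Iic] using Finset.card_le_card this

lemma count_ge (c : Fin k → ℝ) (j : Fin k) :
    k - (j : ℕ) ≤ #(univ.filter fun i => c (Tuple.sort c j) ≤ c i) := by
  classical
  rw [← card_filter_perm (Tuple.sort c) (fun i => c (Tuple.sort c j) ≤ c i)]
  have : Finset.Ici j ⊆ univ.filter fun i => c (Tuple.sort c j) ≤ c (Tuple.sort c i) := by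
    intro i hi
    simp only [mem_filter, mem_univ, true_and]
    exact Tuple.monotone_sort c (mem_Ici.mp hi)
  simpa [Fin.card_Ici] using Finset.card_le_card this

lemma shift_key (c : Fin k → ℝ) {r r' : ℝ} (hrr : r ≤ r') :
    ∑ i, |c i - r| + (r' - r) * (2 * (#(univ.filter fun i => c i ≤ r) : ℝ) - k)
      ≤ ∑ i, |c i - r'| := by
  classical
  set A := #(univ.filter fun i => c i ≤ r) with hA
  have hcard : #(univ.filter fun i => ¬ c i ≤ r) = k - A := by
    have := Finset.card_filter_add_card_filter_not (s := (univ : Finset (Fin k)))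
      (fun i => c i ≤ r)
    simp only [Finset.card_univ, Fintype.card_fin] at this
    omega
  have key : ∀ i : Fin k, (if c i ≤ r then r' - r else r - r') ≤ |c i - r'| - |c i - r| := by
    intro i
    split_ifs with h
    · rw [abs_of_nonpos (by linarith), abs_of_nonpos (by linarith)]; ring_nf; linarith
    · push_neg at h
      have h1 : |c i - r| - |c i - r'| ≤ |(c i - r) - (c i - r')| := abs_sub_abs_le_abs_sub _ _
      have h2 : |(c i - r) - (c i - r')| = r' - r := by
        rw [show (c i - r) - (c i - r') = r' - r by ring, abs_of_nonneg (by linarith)]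
      linarith
  have hsum : ∑ i, (if c i ≤ r then r' - r else r - r') ≤ ∑ i, (|c i - r'| - |c i - r|) :=
    Finset.sum_le_sum fun i _ => key i
  rw [Finset.sum_ite] at hsum
  simp only [Finset.sum_const, nsmul_eq_mul, hcard, ← hA] at hsum
  rw [Finset.sum_sub_distrib] at hsum
  have hAk : (A : ℝ) ≤ k := by
    have : A ≤ k := le_trans (Finset.card_filter_le _ _) (by simp)
    exact_mod_cast this
  have hcast : ((k - A : ℕ) : ℝ) = (k : ℝ) - A := by
    have : A ≤ k := by exact_mod_cast hAk
    push_cast [this]; ring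
  rw [hcast] at hsum
  nlinarith [hsum]

lemma shift_left (c : Fin k → ℝ) {r r' : ℝ} (hrr : r' ≤ r) :
    ∑ i, |c i - r| + (r - r') * (2 * (#(univ.filter fun i => r ≤ c i) : ℝ) - k)
      ≤ ∑ i, |c i - r'| := by
  classical
  have h := shift_key (fun i => -c i) (r := -r) (r' := -r') (neg_le_neg hrr)
  have e1 : ∀ s : ℝ, ∑ i, |(-c i) - (-s)| = ∑ i, |c i - s| := by
    intro s
    refine Finset.sum_congr rfl fun i _ => ?_
    rw [show -c i - -s = -(c i - s) by ring, abs_neg]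
  have e2 : (univ.filter fun i => -c i ≤ -r) = (univ.filter fun i => r ≤ c i) := by
    refine Finset.filter_congr fun i _ => ?_
    simp
  rw [e1, e1, e2, show -r' - -r = r - r' by ring] at h
  exact h


lemma sorted_min (c : Fin k → ℝ) (j : Fin k)
    (h1 : k ≤ 2 * ((j : ℕ) + 1)) (h2 : k ≤ 2 * (k - (j : ℕ))) (r : ℝ) :
    ∑ i, |c i - c (Tuple.sort c j)| ≤ ∑ i, |c i - r| := by
  classical
  set v := c (Tuple.sort c j) with hv
  rcases le_total v r with h | h
  · have key := shift_key c h
    have hc := count_le c j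
    rw [← hv] at hc
    have hcard : (k : ℝ) ≤ 2 * (#(univ.filter fun i => c i ≤ v) : ℝ) := by
      have : k ≤ 2 * #(univ.filter fun i => c i ≤ v) := by omega
      exact_mod_cast this
    nlinarith [key]
  · have key := shift_left c h
    have hc := count_ge c j
    rw [← hv] at hc
    have hcard : (k : ℝ) ≤ 2 * (#(univ.filter fun i => v ≤ c i) : ℝ) := by
      have : k ≤ 2 * #(univ.filter fun i => v ≤ c i) := by omega
      exact_mod_cast this
    nlinarith [key]

lemma sorted_min_strict (c : Fin k → ℝ) (jl ju : Fin k)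
    (heq : c (Tuple.sort c ju) = c (Tuple.sort c jl))
    (h1 : k < 2 * ((ju : ℕ) + 1)) (h2 : k < 2 * (k - (jl : ℕ)))
    {r : ℝ} (hr : r ≠ c (Tuple.sort c jl)) :
    ∑ i, |c i - c (Tuple.sort c jl)| < ∑ i, |c i - r| := by
  classical
  set v := c (Tuple.sort c jl) with hv
  rcases lt_or_gt_of_ne hr with h | h
  · have key := shift_left c (le_of_lt h)
    have hc := count_ge c jl
    rw [← hv] at hc
    have hcard : (k : ℝ) + 1 ≤ 2 * (#(univ.filter fun i => v ≤ c i) : ℝ) := by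
      have : k + 1 ≤ 2 * #(univ.filter fun i => v ≤ c i) := by omega
      exact_mod_cast this
    nlinarith [key]
  · have key := shift_key c (le_of_lt h)
    have hc := count_le c ju
    rw [heq] at hc
    have hcard : (k : ℝ) + 1 ≤ 2 * (#(univ.filter fun i => c i ≤ v) : ℝ) := by
      have : k + 1 ≤ 2 * #(univ.filter fun i => c i ≤ v) := by omega
      exact_mod_cast this
    nlinarith [key]


end OneD

section Geom
variable {X : Type*} [NormedAddCommGroup X] [NormedSpace ℝ X] {k : ℕ}
variable {X : Type*} [NormedAddCommGroup X] [NormedSpace ℝ X] {k : ℕ}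

lemma line_min (a h : X) (hh : h ≠ 0) (t : Fin k → ℝ) (x : Fin k → X)
    (hx : ∀ i, x i = a + t i • h) (s : ℝ)
    (hs : ∀ r : ℝ, ∑ i, |t i - s| ≤ ∑ i, |t i - r|) :
    (a + s • h) ∈ medianSet x := by
  intro z
  obtain ⟨g, hg1, hg2⟩ := exists_dual_vector ℝ h (norm_ne_zero_iff.mpr hh)
  have hhn : (0:ℝ) < ‖h‖ := norm_pos_iff.mpr hh
  have hnorm : ∀ (i : Fin k) (r : ℝ), ‖x i - (a + r • h)‖ = |t i - r| * ‖h‖ := by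
    intro i r
    rw [hx i, show a + t i • h - (a + r • h) = (t i - r) • h by module, norm_smul,
      Real.norm_eq_abs]
  set r := g (z - a) / ‖h‖ with hr
  calc ∑ i, ‖x i - (a + s • h)‖ = ∑ i, |t i - s| * ‖h‖ :=
        Finset.sum_congr rfl fun i _ => hnorm i s
    _ = (∑ i, |t i - s|) * ‖h‖ := by rw [Finset.sum_mul]
    _ ≤ (∑ i, |t i - r|) * ‖h‖ := mul_le_mul_of_nonneg_right (hs r) (norm_nonneg h)
    _ = ∑ i, |t i - r| * ‖h‖ := by rw [Finset.sum_mul]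
    _ ≤ ∑ i, ‖x i - z‖ := by
        refine Finset.sum_le_sum fun i _ => ?_
        have e1 : g (x i - z) = (t i - r) * ‖h‖ := by
          rw [hx i]
          have : a + t i • h - z = t i • h - (z - a) := by abel
          rw [this, map_sub, map_smul, hg2]
          show t i • (‖h‖:ℝ) - g (z - a) = (t i - g (z - a) / ‖h‖) * ‖h‖
          rw [smul_eq_mul]
          field_simp
        have e2 : |t i - r| * ‖h‖ = |g (x i - z)| := by
          rw [e1, abs_mul, abs_of_nonneg (le_of_lt hhn)]
        rw [e2]
        calc |g (x i - z)| ≤ ‖g‖ * ‖x i - z‖ := g.le_opNorm _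
          _ = ‖x i - z‖ := by rw [hg1, one_mul]

lemma medians_collinear [StrictConvexSpace ℝ X] (x : Fin k → X) {y₁ y₂ : X}
    (h₁ : y₁ ∈ medianSet x) (h₂ : y₂ ∈ medianSet x) (hne : y₁ ≠ y₂) (i : Fin k) :
    ∃ c : ℝ, x i = y₁ + c • (y₂ - y₁) := by
  have hray : SameRay ℝ (x i - y₁) (x i - y₂) := by
    by_contra hcon
    set mid : X := (2:ℝ)⁻¹ • (y₁ + y₂) with hmid
    have hdec : ∀ j, x j - mid = (2:ℝ)⁻¹ • ((x j - y₁) + (x j - y₂)) := by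
      intro j; rw [hmid]; module
    have hsum : ∀ j, ‖x j - mid‖ ≤ (‖x j - y₁‖ + ‖x j - y₂‖) / 2 := by
      intro j
      rw [hdec j, norm_smul]
      have := norm_add_le (x j - y₁) (x j - y₂)
      simp only [norm_inv, Real.norm_ofNat]
      linarith
    have hstrict : ‖x i - mid‖ < (‖x i - y₁‖ + ‖x i - y₂‖) / 2 := by
      have hlt := norm_add_lt_of_not_sameRay hcon
      rw [hdec i, norm_smul]
      simp only [norm_inv, Real.norm_ofNat]
      linarith
    have hF : ∑ j, ‖x j - mid‖ < ∑ j, (‖x j - y₁‖ + ‖x j - y₂‖) / 2 :=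
      Finset.sum_lt_sum (fun j _ => hsum j) ⟨i, Finset.mem_univ i, hstrict⟩
    have h12 : ∑ j, ‖x j - y₂‖ = ∑ j, ‖x j - y₁‖ := le_antisymm (h₂ y₁) (h₁ y₂)
    have hval : ∑ j, (‖x j - y₁‖ + ‖x j - y₂‖) / 2 = ∑ j, ‖x j - y₁‖ := by
      rw [← Finset.sum_div, Finset.sum_add_distrib, h12]
      ring
    have := h₁ mid
    rw [hval] at hF
    linarith
  rcases hray with h0 | h0 | ⟨r₁, r₂, hr₁, hr₂, hr⟩
  · refine ⟨0, ?_⟩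
    rw [sub_eq_zero] at h0
    simp [h0]
  · refine ⟨1, ?_⟩
    rw [sub_eq_zero] at h0
    rw [h0]; module
  · by_cases hr12 : r₁ = r₂
    · exfalso
      subst hr12
      have h' := smul_right_injective X (ne_of_gt hr₁) hr
      exact hne (sub_right_injective h')
    · have hd : r₂ - r₁ ≠ 0 := sub_ne_zero.mpr (Ne.symm hr12)
      refine ⟨r₂ / (r₂ - r₁), ?_⟩
      apply smul_right_injective X hd
      show (r₂ - r₁) • (x i) = (r₂ - r₁) • (y₁ + (r₂ / (r₂ - r₁)) • (y₂ - y₁))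
      rw [smul_add, smul_smul, mul_div_cancel₀ _ hd]
      linear_combination (norm := module) -hr

end Geom

end Stmt8Aux

/-- In a strictly convex Banach space, a nonempty set of geometric medians is a
singleton if and only if (i) the points do not lie on a straight line, or (ii) they lie
on a line `x i = a + t i • h` and the `⌈k/2⌉`-th and `(⌊k/2⌋+1)`-th smallest values
among the `t i` coincide (in particular whenever `k` is odd). -/
theorem stmt8 {X : Type*} [NormedAddCommGroup X] [NormedSpace ℝ X] [CompleteSpace X]
    [StrictConvexSpace ℝ X]
    (k : ℕ) (hk : 1 ≤ k) (x : Fin k → X)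
    (hne : (medianSet x).Nonempty) :
    (∃ y₀ : X, medianSet x = {y₀}) ↔
      (¬ OnLine x ∨
        ∃ (a h : X) (t : Fin k → ℝ), (∀ i, x i = a + t i • h) ∧
          sortedVal t ((k + 1) / 2) = sortedVal t (k / 2 + 1)) := by
  classical
  have hm1 : (k + 1) / 2 - 1 < k := by omega
  have hM1 : k / 2 + 1 - 1 < k := by omega
  let jm : Fin k := ⟨(k + 1) / 2 - 1, hm1⟩
  let jM : Fin k := ⟨k / 2 + 1 - 1, hM1⟩
  have hjmv : (jm : ℕ) = (k + 1) / 2 - 1 := rfl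
  have hjMv : (jM : ℕ) = k / 2 := rfl
  have hjmM : jm ≤ jM := by
    rw [Fin.le_def, hjmv, hjMv]; omega
  constructor
  · rintro ⟨y₀, hy₀⟩
    by_cases hline : OnLine x
    · right
      obtain ⟨a, h, hta⟩ := hline
      by_cases hh : h = 0
      · refine ⟨a, 0, fun _ => 0, fun i => ?_, ?_⟩
        · obtain ⟨t, ht⟩ := hta i
          rw [ht, hh]; simp
        · rw [Stmt8Aux.sortedVal_eq _ hm1, Stmt8Aux.sortedVal_eq _ hM1]
      · choose t ht using hta
        refine ⟨a, h, t, ht, ?_⟩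
        by_contra hneq
        rw [Stmt8Aux.sortedVal_eq t hm1, Stmt8Aux.sortedVal_eq t hM1] at hneq
        have hle : t (Tuple.sort t jm) ≤ t (Tuple.sort t jM) :=
          Tuple.monotone_sort t hjmM
        have hlt : t (Tuple.sort t jm) < t (Tuple.sort t jM) := lt_of_le_of_ne hle hneq
        have hmin1 : ∀ r, ∑ i, |t i - t (Tuple.sort t jm)| ≤ ∑ i, |t i - r| :=
          Stmt8Aux.sorted_min t jm (by rw [hjmv]; omega) (by rw [hjmv]; omega)
        have hmin2 : ∀ r, ∑ i, |t i - t (Tuple.sort t jM)| ≤ ∑ i, |t i - r| :=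
          Stmt8Aux.sorted_min t jM (by rw [hjMv]; omega) (by rw [hjMv]; omega)
        have m1 := Stmt8Aux.line_min a h hh t x ht _ hmin1
        have m2 := Stmt8Aux.line_min a h hh t x ht _ hmin2
        rw [hy₀, Set.mem_singleton_iff] at m1 m2
        have heq2 : t (Tuple.sort t jm) • h = t (Tuple.sort t jM) • h :=
          add_left_cancel (m1.trans m2.symm)
        have : (t (Tuple.sort t jm) - t (Tuple.sort t jM)) • h = 0 := by
          rw [sub_smul, heq2, sub_self]
        rcases smul_eq_zero.mp this with h0 | h0
        · exact absurd (sub_eq_zero.mp h0) hneq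
        · exact hh h0
    · exact Or.inl hline
  · intro hrhs
    obtain ⟨y₁, hy₁⟩ := hne
    refine ⟨y₁, Set.eq_singleton_iff_unique_mem.mpr ⟨hy₁, ?_⟩⟩
    intro y₂ hy₂
    by_contra hny
    have hne12 : y₁ ≠ y₂ := fun e => hny e.symm
    choose c hc using fun i => Stmt8Aux.medians_collinear x hy₁ hy₂ hne12 i
    set d := y₂ - y₁ with hd
    have hdne : d ≠ 0 := sub_ne_zero.mpr (Ne.symm hne12)
    have hdpos : (0 : ℝ) < ‖d‖ := norm_pos_iff.mpr hdne
    have hnormline : ∀ (i : Fin k) (s : ℝ), ‖x i - (y₁ + s • d)‖ = |c i - s| * ‖d‖ := by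
      intro i s
      rw [hc i, show y₁ + c i • d - (y₁ + s • d) = (c i - s) • d by module, norm_smul,
        Real.norm_eq_abs]
    have hkey : ∀ s : ℝ, (y₁ + s • d) ∈ medianSet x →
        ∀ r : ℝ, ∑ i, |c i - s| ≤ ∑ i, |c i - r| := by
      intro s hs r
      have h2 := hs (y₁ + r • d)
      rw [Finset.sum_congr rfl (fun i _ => hnormline i s),
        Finset.sum_congr rfl (fun i _ => hnormline i r), ← Finset.sum_mul,
        ← Finset.sum_mul] at h2
      exact le_of_mul_le_mul_right h2 hdpos
    have hy₁' : (y₁ + (0:ℝ) • d) ∈ medianSet x := by simpa using hy₁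
    have hy₂' : (y₁ + (1:ℝ) • d) ∈ medianSet x := by
      have : y₁ + (1:ℝ) • d = y₂ := by rw [hd]; module
      rw [this]; exact hy₂
    have hmin0 := hkey 0 hy₁'
    have hmin1 := hkey 1 hy₂'
    have hcneq : c (Tuple.sort c jm) ≠ c (Tuple.sort c jM) := by
      intro heq
      have huniq : ∀ r : ℝ, r ≠ c (Tuple.sort c jm) →
          ∑ i, |c i - c (Tuple.sort c jm)| < ∑ i, |c i - r| := fun r hr =>
        Stmt8Aux.sorted_min_strict c jm jM heq.symm (by rw [hjMv]; omega)
          (by rw [hjmv]; omega) hr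
      by_cases h0 : (0 : ℝ) = c (Tuple.sort c jm)
      · have h1 : (1 : ℝ) ≠ c (Tuple.sort c jm) := by rw [← h0]; norm_num
        have ha := huniq 1 h1
        have hb := hmin1 (c (Tuple.sort c jm))
        linarith
      · have ha := huniq 0 h0
        have hb := hmin0 (c (Tuple.sort c jm))
        linarith
    rcases hrhs with hnl | ⟨a, h, t, ht, hteq⟩
    · exact hnl ⟨y₁, d, fun i => ⟨c i, hc i⟩⟩
    rw [Stmt8Aux.sortedVal_eq t hm1, Stmt8Aux.sortedVal_eq t hM1] at hteq
    set i0 := Tuple.sort c jm with hi0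
    set j0 := Tuple.sort c jM with hj0
    by_cases hh : h = 0
    · apply hcneq
      have e1 : x i0 = a := by rw [ht i0, hh]; simp
      have e2 : x j0 = a := by rw [ht j0, hh]; simp
      have e3 : c i0 • d = c j0 • d := by
        have e := (e1.trans e2.symm)
        rw [hc i0, hc j0] at e
        exact add_left_cancel e
      have e4 : (c i0 - c j0) • d = 0 := by rw [sub_smul, e3, sub_self]
      rcases smul_eq_zero.mp e4 with h0 | h0
      · exact sub_eq_zero.mp h0
      · exact absurd h0 hdne
    · have hrel : ∀ p q : Fin k, (t p - t q) • h = (c p - c q) • d := by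
        intro p q
        have e1 := (ht p).symm.trans (hc p)
        have e2 := (ht q).symm.trans (hc q)
        calc (t p - t q) • h = (a + t p • h) - (a + t q • h) := by module
          _ = (y₁ + c p • d) - (y₁ + c q • d) := by rw [e1, e2]
          _ = (c p - c q) • d := by module
      have hcij : c i0 - c j0 ≠ 0 := sub_ne_zero.mpr hcneq
      set γ := (t i0 - t j0) / (c i0 - c j0) with hγ
      have hdγ : d = γ • h := by
        have e := hrel i0 j0
        have : d = (c i0 - c j0)⁻¹ • ((c i0 - c j0) • d) := by
          rw [smul_smul, inv_mul_cancel₀ hcij, one_smul]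
        rw [this, ← e, smul_smul, hγ, div_eq_inv_mul]
      have hγne : γ ≠ 0 := by
        intro h0
        rw [h0, zero_smul] at hdγ
        exact hdne hdγ
      have hscal : ∀ p q, t p - t q = (c p - c q) * γ := by
        intro p q
        have h1 := hrel p q
        rw [hdγ, smul_smul] at h1
        have h2 : ((t p - t q) - (c p - c q) * γ) • h = 0 := by
          rw [sub_smul, h1, sub_self]
        rcases smul_eq_zero.mp h2 with h3 | h3
        · linarith [sub_eq_zero.mp h3]
        · exact absurd h3 hh
      have hform : ∀ p, t p = (t i0 - c i0 * γ) + γ * c p := by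
        intro p
        linear_combination hscal p i0
      rcases lt_or_gt_of_ne hγne with hγn | hγp
      · -- γ < 0 : reversed sort
        have hrevm : Fin.revPerm jm = jM := by
          apply Fin.ext
          simp only [Fin.revPerm_apply, Fin.val_rev, hjmv, hjMv]
          omega
        have hrevM : Fin.revPerm jM = jm := by
          apply Fin.ext
          simp only [Fin.revPerm_apply, Fin.val_rev, hjmv, hjMv]
          omega
        have hmono : Monotone (t ∘ (Fin.revPerm.trans (Tuple.sort c))) := by
          intro p q hpq
          simp only [Function.comp_apply, Equiv.trans_apply]
          have hrev : Fin.revPerm q ≤ Fin.revPerm p := by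
            simp only [Fin.revPerm_apply]
            exact Fin.rev_le_rev.mpr hpq
          have h1 := Tuple.monotone_sort c hrev
          simp only [Function.comp_apply] at h1
          have h2 := hscal (Tuple.sort c (Fin.revPerm p)) (Tuple.sort c (Fin.revPerm q))
          nlinarith [h1, h2]
        have hcomp := Tuple.comp_sort_eq_comp_iff_monotone.mpr hmono
        have em : t (Tuple.sort t jm) = (t i0 - c i0 * γ) + γ * c j0 := by
          have := congrFun hcomp jm
          simp only [Function.comp_apply, Equiv.trans_apply, hrevm] at this
          rw [← this, ← hj0]
          exact hform j0
        have eM : t (Tuple.sort t jM) = (t i0 - c i0 * γ) + γ * c i0 := by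
          have := congrFun hcomp jM
          simp only [Function.comp_apply, Equiv.trans_apply, hrevM] at this
          rw [← this, ← hi0]
          exact hform i0
        rw [em, eM] at hteq
        have : c j0 = c i0 := mul_left_cancel₀ hγne (by linarith)
        exact hcneq this.symm
      · -- γ > 0 : same sort
        have hmono : Monotone (t ∘ (Tuple.sort c)) := by
          intro p q hpq
          simp only [Function.comp_apply]
          have h1 := Tuple.monotone_sort c hpq
          simp only [Function.comp_apply] at h1
          have h2 := hscal (Tuple.sort c p) (Tuple.sort c q)
          nlinarith [h1, h2]
        have hcomp := Tuple.comp_sort_eq_comp_iff_monotone.mpr hmono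
        have em : t (Tuple.sort t jm) = (t i0 - c i0 * γ) + γ * c i0 := by
          have := congrFun hcomp jm
          simp only [Function.comp_apply] at this
          rw [← this, ← hi0]
          exact hform i0
        have eM : t (Tuple.sort t jM) = (t i0 - c i0 * γ) + γ * c j0 := by
          have := congrFun hcomp jM
          simp only [Function.comp_apply] at this
          rw [← this, ← hj0]
          exact hform j0
        rw [em, eM] at hteq
        exact hcneq (mul_left_cancel₀ hγne (by linarith))
end

section
/- Let X be a smooth and strictly convex real Banach space, u ∈ X* with ‖u‖_{X*} < 1, k ≥ 1 an integer, and x_1, …, x_k ∈ X. Then the set of geometric quantiles of x_1,…,x_k with parameter u has at most one element in each of the following cases: (i) x_1, …, x_k do not lie on a straight line; (ii) ‖u‖_{X*} ∉ {1 − 2j/k : j = 1, …, ⌊k/2⌋}. -/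
open Finset

section aux
variable {X : Type*} [NormedAddCommGroup X] [NormedSpace ℝ X]

/-- difference quotient of the norm at `h` in direction `v`. -/
noncomputable def Qfun (h v : X) (s : ℝ) : ℝ := (‖h + s • v‖ - ‖h‖) / s

/-- right derivative (as an infimum of quotients). -/
noncomputable def Pfun (h v : X) : ℝ := sInf (Qfun h v '' Set.Ioi (0:ℝ))

variable (h v : X)

lemma Qfun_le {s : ℝ} (hs : 0 < s) : Qfun h v s ≤ ‖v‖ := by
  rw [Qfun, div_le_iff₀ hs]
  have := norm_add_le h (s • v)
  rw [norm_smul, Real.norm_eq_abs, abs_of_pos hs] at this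
  linarith [this]

lemma le_Qfun {s : ℝ} (hs : 0 < s) : -‖v‖ ≤ Qfun h v s := by
  rw [Qfun, le_div_iff₀ hs]
  have h1 : ‖h‖ ≤ ‖h + s • v‖ + ‖s • v‖ := by
    calc ‖h‖ = ‖h + s • v - s • v‖ := by rw [add_sub_cancel_right]
    _ ≤ _ := norm_sub_le _ _
  rw [norm_smul, Real.norm_eq_abs, abs_of_pos hs] at h1
  nlinarith [norm_nonneg v]

lemma Qfun_mono {s t : ℝ} (hs : 0 < s) (hst : s ≤ t) : Qfun h v s ≤ Qfun h v t := by
  have ht : 0 < t := lt_of_lt_of_le hs hst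
  have key : t * ‖h + s • v‖ ≤ (t - s) * ‖h‖ + s * ‖h + t • v‖ := by
    have e : t • (h + s • v) = (t - s) • h + s • (h + t • v) := by module
    calc t * ‖h + s • v‖ = ‖t • (h + s • v)‖ := by
          rw [norm_smul, Real.norm_eq_abs, abs_of_pos ht]
    _ = ‖(t - s) • h + s • (h + t • v)‖ := by rw [e]
    _ ≤ ‖(t - s) • h‖ + ‖s • (h + t • v)‖ := norm_add_le _ _
    _ = (t - s) * ‖h‖ + s * ‖h + t • v‖ := by
        rw [norm_smul, norm_smul, Real.norm_eq_abs, Real.norm_eq_abs,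
          abs_of_nonneg (by linarith), abs_of_pos hs]
  rw [Qfun, Qfun, div_le_div_iff₀ hs ht]
  linarith

lemma bddBelow_Q : BddBelow (Qfun h v '' Set.Ioi (0:ℝ)) := by
  refine ⟨-‖v‖, ?_⟩
  rintro q ⟨s, hs, rfl⟩
  exact le_Qfun h v hs

lemma Pfun_le_Qfun {s : ℝ} (hs : 0 < s) : Pfun h v ≤ Qfun h v s :=
  csInf_le (bddBelow_Q h v) ⟨s, hs, rfl⟩

lemma neg_norm_le_Pfun : -‖v‖ ≤ Pfun h v :=
  le_csInf ⟨Qfun h v 1, 1, Set.mem_Ioi.2 one_pos, rfl⟩ (by rintro q ⟨s, hs, rfl⟩; exact le_Qfun h v hs)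

lemma Pfun_le_norm : Pfun h v ≤ ‖v‖ :=
  (Pfun_le_Qfun h v one_pos).trans (Qfun_le h v one_pos)

lemma exists_Qfun_close {ε : ℝ} (hε : 0 < ε) : ∃ s > 0, Qfun h v s ≤ Pfun h v + ε := by
  have : Pfun h v < Pfun h v + ε := by linarith
  obtain ⟨q, ⟨s, hs, rfl⟩, hq⟩ := exists_lt_of_csInf_lt
    (⟨Qfun h v 1, 1, Set.mem_Ioi.2 one_pos, rfl⟩ : (Qfun h v '' Set.Ioi (0:ℝ)).Nonempty) this
  exact ⟨s, hs, hq.le⟩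

lemma Pfun_zero : Pfun h 0 = 0 := by
  have h1 : ∀ s ∈ Set.Ioi (0:ℝ), Qfun h 0 s = 0 := by
    intro s hs; simp [Qfun]
  refine le_antisymm ?_ ?_
  · have := Pfun_le_Qfun h 0 one_pos
    rwa [h1 1 (Set.mem_Ioi.2 one_pos)] at this
  · refine le_csInf ⟨Qfun h 0 1, 1, Set.mem_Ioi.2 one_pos, rfl⟩ ?_
    rintro q ⟨s, hs, rfl⟩
    rw [h1 s hs]

lemma Pfun_self : Pfun h h = ‖h‖ := by
  have h1 : ∀ s : ℝ, 0 < s → Qfun h h s = ‖h‖ := by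
    intro s hs
    rw [Qfun]
    have : h + s • h = (1 + s) • h := by module
    rw [this, norm_smul, Real.norm_eq_abs, abs_of_pos (by linarith)]
    field_simp
    ring
  refine le_antisymm ?_ ?_
  · rw [← h1 1 one_pos]; exact Pfun_le_Qfun h h one_pos
  · refine le_csInf ⟨Qfun h h 1, 1, Set.mem_Ioi.2 one_pos, rfl⟩ ?_
    rintro q ⟨s, hs, rfl⟩
    rw [h1 s hs]

lemma Pfun_neg_self : Pfun h (-h) = -‖h‖ := by
  refine le_antisymm ?_ ?_
  · have : Qfun h (-h) (1/2) = -‖h‖ := by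
      rw [Qfun]
      have : h + (1/2 : ℝ) • (-h) = (1/2 : ℝ) • h := by module
      rw [this, norm_smul]
      simp
      ring
    rw [← this]; exact Pfun_le_Qfun h (-h) (by norm_num)
  · have := neg_norm_le_Pfun h (-h)
    rwa [norm_neg] at this

lemma Pfun_pair_nonneg : 0 ≤ Pfun h v + Pfun h (-v) := by
  have key : ∀ s : ℝ, 0 < s → 0 ≤ Qfun h v s + Qfun h (-v) s := by
    intro s hs
    rw [Qfun, Qfun, ← add_div, le_div_iff₀ hs]
    have : (2:ℝ) * ‖h‖ ≤ ‖h + s • v‖ + ‖h + s • -v‖ := by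
      calc (2:ℝ) * ‖h‖ = ‖(h + s • v) + (h + s • -v)‖ := by
            rw [show (h + s • v) + (h + s • -v) = (2:ℝ) • h by module, norm_smul]; norm_num
      _ ≤ _ := norm_add_le _ _
    linarith
  by_contra hlt
  push_neg at hlt
  set ε := -(Pfun h v + Pfun h (-v)) with hε
  have hεpos : 0 < ε := by simp [hε]; linarith
  obtain ⟨s1, hs1, hq1⟩ := exists_Qfun_close h v (by positivity : (0:ℝ) < ε/4)
  obtain ⟨s2, hs2, hq2⟩ := exists_Qfun_close h (-v) (by positivity : (0:ℝ) < ε/4)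
  set r := min s1 s2 with hr
  have hrpos : 0 < r := lt_min hs1 hs2
  have e1 : Qfun h v r ≤ Pfun h v + ε/4 := (Qfun_mono h v hrpos (min_le_left _ _)).trans hq1
  have e2 : Qfun h (-v) r ≤ Pfun h (-v) + ε/4 := (Qfun_mono h (-v) hrpos (min_le_right _ _)).trans hq2
  have := key r hrpos
  simp [hε] at e1 e2
  linarith

end aux

section aux2
variable {X : Type*} [NormedAddCommGroup X] [NormedSpace ℝ X]
variable (h : X)

lemma Qfun_smul (v : X) {c s : ℝ} (hc : 0 < c) (hs : 0 < s) :
    Qfun h (c • v) s = c * Qfun h v (c * s) := by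
  rw [Qfun, Qfun, smul_smul, mul_comm s c]
  field_simp

lemma Pfun_smul (v : X) {c : ℝ} (hc : 0 < c) : Pfun h (c • v) = c * Pfun h v := by
  refine le_antisymm ?_ ?_
  · refine le_of_forall_pos_le_add ?_
    intro ε hε
    obtain ⟨s, hs, hq⟩ := exists_Qfun_close h v (show (0:ℝ) < ε / c by positivity)
    have h1 : Pfun h (c • v) ≤ Qfun h (c • v) (s / c) := Pfun_le_Qfun _ _ (by positivity)
    rw [Qfun_smul h v hc (by positivity), mul_div_cancel₀ _ (ne_of_gt hc)] at h1
    calc Pfun h (c • v) ≤ c * Qfun h v s := h1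
    _ ≤ c * (Pfun h v + ε / c) := by nlinarith
    _ = c * Pfun h v + ε := by field_simp
  · refine le_of_forall_pos_le_add ?_
    intro ε hε
    obtain ⟨s, hs, hq⟩ := exists_Qfun_close h (c • v) hε
    have h1 : Pfun h v ≤ Qfun h v (c * s) := Pfun_le_Qfun _ _ (by positivity)
    rw [Qfun_smul h v hc hs] at hq
    nlinarith

lemma Pfun_subadd (v w : X) : Pfun h (v + w) ≤ Pfun h v + Pfun h w := by
  refine le_of_forall_pos_le_add ?_
  intro ε hε
  obtain ⟨s1, hs1, hq1⟩ := exists_Qfun_close h v (half_pos hε)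
  obtain ⟨s2, hs2, hq2⟩ := exists_Qfun_close h w (half_pos hε)
  set r := min s1 s2 with hr
  have hrpos : 0 < r := lt_min hs1 hs2
  have e1 : Qfun h v r ≤ Pfun h v + ε / 2 := (Qfun_mono h v hrpos (min_le_left _ _)).trans hq1
  have e2 : Qfun h w r ≤ Pfun h w + ε / 2 := (Qfun_mono h w hrpos (min_le_right _ _)).trans hq2
  have key : Qfun h (v + w) (r / 2) ≤ Qfun h v r + Qfun h w r := by
    rw [Qfun, Qfun, Qfun]
    have hnorm : ‖h + (r / 2) • (v + w)‖ ≤ (‖h + r • v‖ + ‖h + r • w‖) / 2 := by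
      have e : h + (r / 2) • (v + w) = (2⁻¹ : ℝ) • ((h + r • v) + (h + r • w)) := by module
      rw [e, norm_smul]
      have := norm_add_le (h + r • v) (h + r • w)
      simp only [Real.norm_eq_abs]
      rw [abs_of_pos (by norm_num : (0:ℝ) < (2:ℝ)⁻¹)]
      linarith
    rw [← add_div, div_le_div_iff₀ (by positivity) hrpos]
    nlinarith
  calc Pfun h (v + w) ≤ Qfun h (v + w) (r / 2) := Pfun_le_Qfun _ _ (by positivity)
  _ ≤ Qfun h v r + Qfun h w r := key
  _ ≤ Pfun h v + Pfun h w + ε := by linarith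

lemma exists_support (v0 : X) (hv0 : v0 ≠ 0) :
    ∃ G : X →L[ℝ] ℝ, (∀ w, G w ≤ Pfun h w) ∧ G v0 = Pfun h v0 := by
  set f : X →ₗ.[ℝ] ℝ := LinearPMap.mkSpanSingleton v0 (Pfun h v0) hv0 with hf
  have hdomeq : f.domain = Submodule.span ℝ {v0} :=
    LinearPMap.domain_mkSpanSingleton v0 (Pfun h v0) _
  have hdom : ∀ x : f.domain, ∃ t : ℝ, t • v0 = (x : X) := by
    intro x
    have h2 : (x : X) ∈ Submodule.span ℝ {v0} := hdomeq ▸ x.2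
    exact Submodule.mem_span_singleton.1 h2
  have happ : ∀ (t : ℝ) (hm : t • v0 ∈ f.domain), f ⟨t • v0, hm⟩ = t * Pfun h v0 := by
    intro t hm
    exact LinearPMap.mkSpanSingleton'_apply v0 (Pfun h v0) _ t hm
  have hfle : ∀ x : f.domain, f x ≤ Pfun h (x : X) := by
    intro x
    obtain ⟨t, ht⟩ := hdom x
    have hx : x = ⟨t • v0, by rw [ht]; exact x.2⟩ := by
      apply Subtype.ext; simp [ht]
    rw [hx, happ t _]
    show t * Pfun h v0 ≤ Pfun h (t • v0)
    rcases lt_trichotomy t 0 with htl | rfl | htp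
    · have e : t • v0 = (-t) • (-v0) := by module
      rw [e, Pfun_smul h (-v0) (by linarith : (0:ℝ) < -t)]
      have := Pfun_pair_nonneg h v0
      nlinarith
    · simp [Pfun_zero]
    · rw [Pfun_smul h v0 htp]
  obtain ⟨g, hg1, hg2⟩ := exists_extension_of_le_sublinear f (Pfun h)
    (fun c hc x => Pfun_smul h x hc) (Pfun_subadd h) hfle
  have hbound : ∀ w : X, ‖g w‖ ≤ 1 * ‖w‖ := by
    intro w
    rw [Real.norm_eq_abs, one_mul, abs_le]
    constructor
    · have h1 : g (-w) ≤ Pfun h (-w) := hg2 (-w)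
      have h2 : Pfun h (-w) ≤ ‖(-w)‖ := Pfun_le_norm h (-w)
      rw [norm_neg] at h2
      have : g (-w) = - g w := by simp
      linarith
    · exact (hg2 w).trans (Pfun_le_norm h w)
  refine ⟨g.mkContinuous 1 hbound, ?_, ?_⟩
  · intro w
    exact hg2 w
  · have hmem : v0 ∈ f.domain := by
      rw [hf]
      exact Submodule.mem_span_singleton_self v0
    have := hg1 ⟨v0, hmem⟩
    simp only [LinearMap.mkContinuous_apply]
    rw [show g v0 = g ((⟨v0, hmem⟩ : f.domain) : X) from rfl, this]
    exact LinearPMap.mkSpanSingleton_apply ℝ ℝ hv0 (Pfun h v0)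

lemma Pfun_pair_eq (hne : h ≠ 0)
    (hsm : ∃! f : X →L[ℝ] ℝ, ‖f‖ = 1 ∧ f h = ‖h‖) (v : X) :
    Pfun h v + Pfun h (-v) = 0 := by
  rcases eq_or_ne v 0 with rfl | hv
  · simp [Pfun_zero]
  obtain ⟨G1, hG1le, hG1v⟩ := exists_support h v hv
  obtain ⟨G2, hG2le, hG2v⟩ := exists_support h (-v) (neg_ne_zero.2 hv)
  have hnorming : ∀ G : X →L[ℝ] ℝ, (∀ w, G w ≤ Pfun h w) → (‖G‖ = 1 ∧ G h = ‖h‖) := by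
    intro G hGle
    have hGh : G h = ‖h‖ := by
      have h1 : G h ≤ ‖h‖ := by rw [← Pfun_self h]; exact hGle h
      have h2 : G (-h) ≤ -‖h‖ := by rw [← Pfun_neg_self h]; exact hGle (-h)
      rw [map_neg] at h2
      linarith
    have hb : ∀ w, ‖G w‖ ≤ 1 * ‖w‖ := by
      intro w
      rw [Real.norm_eq_abs, one_mul, abs_le]
      refine ⟨?_, (hGle w).trans (Pfun_le_norm h w)⟩
      have h1 := (hGle (-w)).trans (Pfun_le_norm h (-w))
      rw [map_neg, norm_neg] at h1
      linarith
    have hle : ‖G‖ ≤ 1 := G.opNorm_le_bound zero_le_one hb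
    have hge : 1 ≤ ‖G‖ := by
      have := G.le_opNorm h
      rw [hGh] at this
      rw [Real.norm_eq_abs, abs_of_nonneg (norm_nonneg h)] at this
      have hpos : 0 < ‖h‖ := norm_pos_iff.2 hne
      nlinarith
    exact ⟨le_antisymm hle hge, hGh⟩
  have e12 : G1 = G2 := by
    obtain ⟨f, hfspec, hfuniq⟩ := hsm
    rw [hfuniq G1 (hnorming G1 hG1le), hfuniq G2 (hnorming G2 hG2le)]
  rw [← hG1v, ← hG2v, e12]
  have : G2 v + G2 (-v) = 0 := by rw [map_neg]; ring
  exact this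

end aux2

section main
variable {X : Type*} [NormedAddCommGroup X] [NormedSpace ℝ X] [StrictConvexSpace ℝ X]

set_option maxHeartbeats 1000000 in
lemma key_lemma
    (hsmooth : ∀ v : X, v ≠ 0 → ∃! f : X →L[ℝ] ℝ, ‖f‖ = 1 ∧ f v = ‖v‖)
    (u : X →L[ℝ] ℝ) (hu : ‖u‖ < 1) {k : ℕ} (hk : 1 ≤ k) (x : Fin k → X)
    {y1 y2 : X} (hy1 : y1 ∈ quantileSet u x) (hy2 : y2 ∈ quantileSet u x)
    (hne : y1 ≠ y2) :
    OnLine x ∧ ∃ j : ℕ, 1 ≤ j ∧ j ≤ k / 2 ∧ ‖u‖ = 1 - 2 * (j : ℝ) / k := by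
  classical
  set h : X := y2 - y1 with hhdef
  have hh : h ≠ 0 := sub_ne_zero.2 hne.symm
  set ym : X := y1 + (2⁻¹ : ℝ) • h with hymdef
  -- basic identities
  have hmid : ∀ i, x i - ym = (2⁻¹ : ℝ) • ((x i - y1) + (x i - y2)) := by
    intro i; rw [hymdef, hhdef]; module
  have huhalf : ∀ i, u (x i - ym) = 2⁻¹ * (u (x i - y1) + u (x i - y2)) := by
    intro i
    rw [hmid i, map_smul, map_add]
    simp [smul_eq_mul]
  -- F(y1) = F(y2)
  have hF12 : ∑ i, (‖x i - y1‖ + u (x i - y1)) = ∑ i, (‖x i - y2‖ + u (x i - y2)) :=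
    le_antisymm (hy1 y2) (hy2 y1)
  -- termwise bound at the midpoint
  have hterm : ∀ i, ‖x i - ym‖ + u (x i - ym) ≤
      2⁻¹ * ((‖x i - y1‖ + u (x i - y1)) + (‖x i - y2‖ + u (x i - y2))) := by
    intro i
    have hn : ‖x i - ym‖ ≤ 2⁻¹ * (‖x i - y1‖ + ‖x i - y2‖) := by
      rw [hmid i, norm_smul]
      have := norm_add_le (x i - y1) (x i - y2)
      simp only [Real.norm_eq_abs]
      rw [abs_of_pos (by norm_num : (0:ℝ) < (2:ℝ)⁻¹)]
      linarith
    rw [huhalf i]; linarith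
  have hFm_le : ∑ i, (‖x i - ym‖ + u (x i - ym)) ≤ ∑ i, (‖x i - y1‖ + u (x i - y1)) := by
    calc ∑ i, (‖x i - ym‖ + u (x i - ym))
        ≤ ∑ i, 2⁻¹ * ((‖x i - y1‖ + u (x i - y1)) + (‖x i - y2‖ + u (x i - y2))) :=
          Finset.sum_le_sum (fun i _ => hterm i)
      _ = 2⁻¹ * (∑ i, (‖x i - y1‖ + u (x i - y1)) + ∑ i, (‖x i - y2‖ + u (x i - y2))) := by
          rw [← Finset.mul_sum, Finset.sum_add_distrib]
      _ = ∑ i, (‖x i - y1‖ + u (x i - y1)) := by rw [← hF12]; ring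
  have hFm_eq : ∑ i, (‖x i - ym‖ + u (x i - ym)) = ∑ i, (‖x i - y1‖ + u (x i - y1)) :=
    le_antisymm hFm_le (hy1 ym)
  have hym_min : ym ∈ quantileSet u x := by
    intro z; rw [hFm_eq]; exact hy1 z
  -- termwise equality
  have htermeq : ∀ i, ‖x i - ym‖ + u (x i - ym) =
      2⁻¹ * ((‖x i - y1‖ + u (x i - y1)) + (‖x i - y2‖ + u (x i - y2))) := by
    have hsum0 : ∑ i, (2⁻¹ * ((‖x i - y1‖ + u (x i - y1)) + (‖x i - y2‖ + u (x i - y2)))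
        - (‖x i - ym‖ + u (x i - ym))) = 0 := by
      rw [Finset.sum_sub_distrib, hFm_eq]
      rw [← Finset.mul_sum, Finset.sum_add_distrib, ← hF12]
      ring
    have := (Finset.sum_eq_zero_iff_of_nonneg (fun i _ => by linarith [hterm i])).1 hsum0
    intro i
    have := this i (Finset.mem_univ i)
    linarith
  have hnormadd : ∀ i, ‖(x i - y1) + (x i - y2)‖ = ‖x i - y1‖ + ‖x i - y2‖ := by
    intro i
    have h1 := htermeq i
    rw [huhalf i] at h1
    have h2 : ‖x i - ym‖ = 2⁻¹ * (‖x i - y1‖ + ‖x i - y2‖) := by linarith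
    have h3 : ‖x i - ym‖ = 2⁻¹ * ‖(x i - y1) + (x i - y2)‖ := by
      rw [hmid i, norm_smul]; simp only [Real.norm_eq_abs]
      rw [abs_of_pos (by norm_num : (0:ℝ) < (2:ℝ)⁻¹)]
    rw [h3] at h2; linarith
  -- the points are on the line through y1 and y2
  have hline : ∀ i, ∃ t : ℝ, x i = y1 + t • h ∧ (t ≤ 0 ∨ 1 ≤ t) := by
    intro i
    have hsr : SameRay ℝ (x i - y1) (x i - y2) := sameRay_iff_norm_add.2 (hnormadd i)
    rcases hsr with h0 | h0 | ⟨r, s, hr, hs, hrs⟩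
    · refine ⟨0, ?_, Or.inl le_rfl⟩
      rw [sub_eq_zero] at h0
      rw [h0]; module
    · refine ⟨1, ?_, Or.inr le_rfl⟩
      rw [sub_eq_zero] at h0
      rw [h0, hhdef]; module
    · have hxy2 : x i - y2 = (x i - y1) - h := by rw [hhdef]; module
      rw [hxy2] at hrs
      -- r • a = s • (a - h)  ⟹  (s - r) • a = s • h
      have hkey : (s - r) • (x i - y1) = s • h := by
        linear_combination (norm := module) -hrs
      by_cases hsr2 : s - r = 0
      · exfalso
        rw [hsr2, zero_smul] at hkey
        exact hh (by
          have := hkey.symm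
          rcases smul_eq_zero.1 this with h' | h'
          · exact absurd h' (ne_of_gt hs)
          · exact h')
      · refine ⟨s / (s - r), ?_, ?_⟩
        · have : x i - y1 = (s / (s - r)) • h := by
            rw [div_eq_mul_inv, mul_comm, mul_smul, ← hkey, smul_smul,
              inv_mul_cancel₀ hsr2, one_smul]
          rw [← this]; module
        · rcases lt_or_gt_of_ne hsr2 with hlt | hgt
          · -- s - r < 0, so t < 0
            left
            apply div_nonpos_of_nonneg_of_nonpos hs.le
            linarith
          · -- s - r > 0, and s ≥ s - r since r > 0, so t ≥ 1
            right
            rw [le_div_iff₀ hgt]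
            linarith
  choose t ht1 ht2 using hline
  have honline : OnLine x := ⟨y1, h, fun i => ⟨t i, ht1 i⟩⟩
  refine ⟨honline, ?_⟩
  have hkpos : (0:ℝ) < k := by exact_mod_cast hk
  have hmymi : ∀ i, x i - ym = (t i - 2⁻¹) • h := by
    intro i; rw [ht1 i, hymdef]; module
  set p : ℕ := (univ.filter (fun i => t i ≤ 0)).card with hpdef
  have hple : p ≤ k := (Finset.card_filter_le _ _).trans (by simp)
  have hcard_not : (univ.filter (fun i => ¬ t i ≤ 0)).card = k - p := by
    have := Finset.card_filter_add_card_filter_not (s := (univ : Finset (Fin k)))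
      (p := fun i => t i ≤ 0)
    simp only [Finset.card_univ, Fintype.card_fin] at this
    omega
  -- Claim A: the first-order inequality
  have claimA : ∀ v : X, (k:ℝ) * u v ≤ (p:ℝ) * Pfun h v + ((k:ℝ) - p) * Pfun h (-v) := by
    intro v
    refine le_of_forall_pos_le_add ?_
    intro ε hε
    obtain ⟨s1, hs1, hq1⟩ := exists_Qfun_close h v (show (0:ℝ) < ε/k by positivity)
    obtain ⟨s2, hs2, hq2⟩ := exists_Qfun_close h (-v) (show (0:ℝ) < ε/k by positivity)
    set s := min s1 s2 / 2 with hsdef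
    have hspos : 0 < s := by
      rw [hsdef]; have := lt_min hs1 hs2; positivity
    have h2s : 2 * s = min s1 s2 := by rw [hsdef]; ring
    -- quantile inequality at z = ym + s • v
    have hq := hym_min (ym + s • v)
    have hz : ∀ i, x i - (ym + s • v) = (x i - ym) - s • v := by intro i; abel
    have hsum_u : ∀ i, u (x i - (ym + s • v)) = u (x i - ym) - s * u v := by
      intro i; rw [hz i, map_sub, map_smul, smul_eq_mul]
    have hstep1 : (k:ℝ) * (s * u v) ≤ ∑ i, (‖(x i - ym) - s • v‖ - ‖x i - ym‖) := by
      have e1 : ∑ i, (‖x i - (ym + s • v)‖ + u (x i - (ym + s • v)))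
          = ∑ i, ‖(x i - ym) - s • v‖ + ∑ i, u (x i - ym) - (k:ℝ) * (s * u v) := by
        have : ∀ i, ‖x i - (ym + s • v)‖ + u (x i - (ym + s • v))
            = (‖(x i - ym) - s • v‖ + u (x i - ym)) - s * u v := by
          intro i; rw [hsum_u i, hz i]; ring
        rw [Finset.sum_congr rfl (fun i _ => this i), Finset.sum_sub_distrib,
          Finset.sum_add_distrib, Finset.sum_const, Finset.card_univ, Fintype.card_fin,
          nsmul_eq_mul]
      have e2 : ∑ i, (‖x i - ym‖ + u (x i - ym))
          = ∑ i, ‖x i - ym‖ + ∑ i, u (x i - ym) := Finset.sum_add_distrib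
      rw [e1, e2] at hq
      rw [Finset.sum_sub_distrib]
      linarith
    -- termwise bound
    have hstep2 : ∀ i, ‖(x i - ym) - s • v‖ - ‖x i - ym‖ ≤
        s * (if t i ≤ 0 then Pfun h v + ε/k else Pfun h (-v) + ε/k) := by
      intro i
      rw [hmymi i]
      by_cases hti : t i ≤ 0
      · rw [if_pos hti]
        set τ := t i - 2⁻¹ with hτdef
        have hτ : τ ≤ -2⁻¹ := by rw [hτdef]; linarith
        clear_value τ
        have hτpos : 0 < -τ := by linarith
        set r := s / (-τ) with hrdef
        have hrpos : 0 < r := by positivity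
        have hr1 : r ≤ s1 := by
          have hr2 : r ≤ 2 * s := by
            rw [hrdef, div_le_iff₀ hτpos]; nlinarith
          rw [h2s] at hr2
          exact hr2.trans (min_le_left _ _)
        have hmul : (-τ) * r = s := by
          rw [hrdef, ← mul_div_assoc, mul_comm, mul_div_assoc, div_self (ne_of_gt hτpos), mul_one]
        have hid1 : ‖τ • h - s • v‖ = (-τ) * ‖h + r • v‖ := by
          have e : τ • h - s • v = -((-τ) • (h + r • v)) := by
            rw [smul_add, smul_smul, hmul]; module
          rw [e, norm_neg, norm_smul, Real.norm_eq_abs, abs_of_pos hτpos]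
        have hid2 : ‖τ • h‖ = (-τ) * ‖h‖ := by
          rw [norm_smul, Real.norm_eq_abs, abs_of_neg (by linarith : τ < 0)]
        have hQ : ‖τ • h - s • v‖ - ‖τ • h‖ = s * Qfun h v r := by
          rw [hid1, hid2, Qfun, ← hmul]
          field_simp
          ring
        rw [hQ]
        have hQle : Qfun h v r ≤ Pfun h v + ε/k :=
          (Qfun_mono h v hrpos hr1).trans hq1
        exact mul_le_mul_of_nonneg_left hQle hspos.le
      · rw [if_neg hti]
        have hti1 : 1 ≤ t i := (ht2 i).resolve_left hti
        set τ := t i - 2⁻¹ with hτdef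
        have hτ : (2⁻¹:ℝ) ≤ τ := by rw [hτdef]; linarith
        clear_value τ
        have hτpos : 0 < τ := by linarith
        set r := s / τ with hrdef
        have hrpos : 0 < r := by positivity
        have hr1 : r ≤ s2 := by
          have hr2 : r ≤ 2 * s := by
            rw [hrdef, div_le_iff₀ hτpos]; nlinarith
          rw [h2s] at hr2
          exact hr2.trans (min_le_right _ _)
        have hmul : τ * r = s := by
          rw [hrdef, ← mul_div_assoc, mul_comm, mul_div_assoc, div_self (ne_of_gt hτpos), mul_one]
        have hid1 : ‖τ • h - s • v‖ = τ * ‖h + r • (-v)‖ := by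
          have e : τ • h - s • v = τ • (h + r • (-v)) := by
            rw [smul_add, smul_smul, hmul]
            module
          rw [e, norm_smul, Real.norm_eq_abs, abs_of_pos hτpos]
        have hid2 : ‖τ • h‖ = τ * ‖h‖ := by
          rw [norm_smul, Real.norm_eq_abs, abs_of_pos hτpos]
        have hQ : ‖τ • h - s • v‖ - ‖τ • h‖ = s * Qfun h (-v) r := by
          rw [hid1, hid2, Qfun, ← hmul]
          field_simp
        rw [hQ]
        have hQle : Qfun h (-v) r ≤ Pfun h (-v) + ε/k :=
          (Qfun_mono h (-v) hrpos hr1).trans hq2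
        exact mul_le_mul_of_nonneg_left hQle hspos.le
    -- sum the termwise bounds
    have hsum2 : ∑ i, (‖(x i - ym) - s • v‖ - ‖x i - ym‖) ≤
        s * ((p:ℝ) * (Pfun h v + ε/k) + ((k:ℝ) - p) * (Pfun h (-v) + ε/k)) := by
      calc ∑ i, (‖(x i - ym) - s • v‖ - ‖x i - ym‖)
          ≤ ∑ i, s * (if t i ≤ 0 then Pfun h v + ε/k else Pfun h (-v) + ε/k) :=
            Finset.sum_le_sum (fun i _ => hstep2 i)
        _ = s * ∑ i, (if t i ≤ 0 then Pfun h v + ε/k else Pfun h (-v) + ε/k) := by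
            rw [Finset.mul_sum]
        _ = s * ((p:ℝ) * (Pfun h v + ε/k) + ((k:ℝ) - p) * (Pfun h (-v) + ε/k)) := by
            congr 1
            rw [Finset.sum_ite, Finset.sum_const, Finset.sum_const, ← hpdef, hcard_not,
              nsmul_eq_mul, nsmul_eq_mul, Nat.cast_sub hple]
    have hcomb := hstep1.trans hsum2
    have hdiv : (k:ℝ) * u v ≤ (p:ℝ) * (Pfun h v + ε/k) + ((k:ℝ) - p) * (Pfun h (-v) + ε/k) := by
      have := (mul_le_mul_iff_right₀ hspos).1 (by linarith : s * ((k:ℝ) * u v) ≤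
        s * ((p:ℝ) * (Pfun h v + ε/k) + ((k:ℝ) - p) * (Pfun h (-v) + ε/k)))
      linarith
    have hexp : (p:ℝ) * (Pfun h v + ε/k) + ((k:ℝ) - p) * (Pfun h (-v) + ε/k)
        = (p:ℝ) * Pfun h v + ((k:ℝ) - p) * Pfun h (-v) + ε := by
      field_simp
      ring
    linarith
  -- equality from Claim A, using smoothness
  have hpair := Pfun_pair_eq h hh (hsmooth h hh)
  have hEq : ∀ v : X, (k:ℝ) * u v = (2*(p:ℝ) - k) * Pfun h v := by
    intro v
    have hA := claimA v
    have hB := claimA (-v)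
    rw [neg_neg, map_neg] at hB
    have hPneg : Pfun h (-v) = - Pfun h v := by have := hpair v; linarith
    rw [hPneg] at hA hB
    nlinarith [hA, hB]
  -- final case analysis
  by_cases hcrit : 2*(p:ℝ) - (k:ℝ) = 0
  · have hu0 : u = 0 := by
      ext v
      have h1 := hEq v
      rw [hcrit, zero_mul] at h1
      have : u v = 0 := by
        have := mul_eq_zero.1 h1
        rcases this with h' | h'
        · exact absurd h' (ne_of_gt hkpos)
        · exact h'
      simpa using this
    have hk2p : k = 2 * p := by
      have : (k:ℝ) = ((2*p : ℕ) : ℝ) := by push_cast; linarith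
      exact_mod_cast this
    have hp1 : 1 ≤ p := by omega
    refine ⟨p, hp1, by omega, ?_⟩
    rw [hu0, norm_zero]
    have hkr : (k:ℝ) = 2*(p:ℝ) := by linarith
    rw [hkr]
    have hppos : (0:ℝ) < p := by
      have : (0:ℕ) < p := hp1
      exact_mod_cast this
    field_simp
    norm_num
  · have hPabs : ∀ w : X, |Pfun h w| ≤ ‖w‖ :=
      fun w => abs_le.2 ⟨neg_norm_le_Pfun h w, Pfun_le_norm h w⟩
    have hval : ∀ v, u v = ((2*(p:ℝ) - k) * Pfun h v)/k := by
      intro v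
      have := hEq v
      field_simp
      linarith
    have hub : ‖u‖ ≤ |2*(p:ℝ) - k| / k := by
      refine u.opNorm_le_bound (by positivity) ?_
      intro w
      rw [hval w, Real.norm_eq_abs, abs_div, abs_mul, abs_of_pos hkpos]
      rw [div_mul_eq_mul_div, div_le_div_iff₀ hkpos hkpos]
      have h3 := mul_le_mul_of_nonneg_right
        (mul_le_mul_of_nonneg_left (hPabs w) (abs_nonneg (2*(p:ℝ) - k))) hkpos.le
      linarith
    have hlb : |2*(p:ℝ) - k| / k ≤ ‖u‖ := by
      have h1 : u h = ((2*(p:ℝ) - k) * ‖h‖)/k := by rw [hval h, Pfun_self]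
      have h2 : |u h| ≤ ‖u‖ * ‖h‖ := by
        have := u.le_opNorm h
        rwa [Real.norm_eq_abs] at this
      rw [h1, abs_div, abs_mul, abs_of_pos hkpos, abs_of_nonneg (norm_nonneg h)] at h2
      have hhpos : 0 < ‖h‖ := norm_pos_iff.2 hh
      rw [div_le_iff₀ hkpos] at h2 ⊢
      nlinarith
    have hnu : ‖u‖ = |2*(p:ℝ) - k| / k := le_antisymm hub hlb
    have habs_lt : |2*(p:ℝ) - k| < k := by
      rw [hnu, div_lt_one hkpos] at hu
      exact hu
    have hp_pos : 1 ≤ p := by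
      by_contra h0
      push_neg at h0
      have hp0 : p = 0 := by omega
      rw [hp0] at habs_lt
      push_cast at habs_lt
      rw [show 2*(0:ℝ) - k = -k by ring, abs_neg, abs_of_pos hkpos] at habs_lt
      linarith
    have hp_lt : p < k := by
      by_contra h0
      push_neg at h0
      have hpk : p = k := le_antisymm hple h0
      rw [hpk] at habs_lt
      rw [show 2*(k:ℝ) - k = k by ring, abs_of_pos hkpos] at habs_lt
      linarith
    refine ⟨min p (k - p), ?_, ?_, ?_⟩
    · omega
    · omega
    · rw [hnu]
      have hj : |2*(p:ℝ) - k| = (k:ℝ) - 2 * ((min p (k-p) : ℕ) : ℝ) := by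
        rcases le_or_gt p (k - p) with hc | hc
        · rw [min_eq_left hc]
          have h2p : 2*(p:ℝ) ≤ k := by
            have : 2*p ≤ k := by omega
            exact_mod_cast this
          rw [abs_of_nonpos (by linarith)]
          ring
        · rw [min_eq_right hc.le]
          have h2p : (k:ℝ) ≤ 2*p := by
            have : k ≤ 2*p := by omega
            exact_mod_cast this
          have hcast2 : ((k - p : ℕ):ℝ) = (k:ℝ) - p := by
            rw [Nat.cast_sub hple]
          rw [abs_of_nonneg (by linarith), hcast2]
          ring
      rw [hj]
      field_simp

end main

/-- In a smooth and strictly convex Banach space, the set of geometric quantiles has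
at most one element if (i) the points do not lie on a straight line, or
(ii) `‖u‖ ∉ {1 − 2j/k : j = 1, …, ⌊k/2⌋}`. -/
theorem stmt10 {X : Type*} [NormedAddCommGroup X] [NormedSpace ℝ X] [CompleteSpace X]
    [StrictConvexSpace ℝ X]
    (hsmooth : ∀ v : X, v ≠ 0 → ∃! f : X →L[ℝ] ℝ, ‖f‖ = 1 ∧ f v = ‖v‖)
    (u : X →L[ℝ] ℝ) (hu : ‖u‖ < 1) (k : ℕ) (hk : 1 ≤ k) (x : Fin k → X) :
    ((¬ OnLine x) → (quantileSet u x).Subsingleton) ∧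
    ((∀ j : ℕ, 1 ≤ j → j ≤ k / 2 → ‖u‖ ≠ 1 - 2 * (j : ℝ) / k) →
      (quantileSet u x).Subsingleton) := by
  constructor
  · intro hnl y1 hy1 y2 hy2
    by_contra hne
    exact hnl (key_lemma hsmooth u hu hk x hy1 hy2 hne).1
  · intro hcond y1 hy1 y2 hy2
    by_contra hne
    obtain ⟨j, hj1, hj2, hju⟩ := (key_lemma hsmooth u hu hk x hy1 hy2 hne).2
    exact hcond j hj1 hj2 hju
end

section
/- Let X be a strictly convex real Banach space, k ≥ 1 an integer, and suppose x_1, …, x_k ∈ X all lie on a straight line L = {a + t·h : t ∈ ℝ} with ‖h‖ = 1. Then: (i) every minimizer over y ∈ X of y ↦ Σ_{i=1}^k ‖x_i − y‖ lies on L, and the set of minimizers over X coincides with the set of minimizers of the same function over L; (ii) if u ∈ X* with ‖u‖_{X*} < 1 satisfies u = u(h)·e for some e ∈ X* with ‖e‖_{X*} = 1 and e(h) = 1 (the case 'v = 0'), then every geometric quantile of x_1,…,x_k with parameter u lies on L, and the set of minimizers of F over X coincides with the set of minimizers of F over L. -/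
section aux
variable {X : Type*} [NormedAddCommGroup X] [NormedSpace ℝ X]

lemma proj_term {k : ℕ} (a h : X) (hh : ‖h‖ = 1) (x : Fin k → X)
    (hx : ∀ i, ∃ t : ℝ, x i = a + t • h)
    (e : X →L[ℝ] ℝ) (heh : e h = 1) (z : X) (i : Fin k) :
    x i - (a + e (z - a) • h) = (e (x i - z)) • h := by
  obtain ⟨t, ht⟩ := hx i
  have h2 : e (x i - z) = t - e (z - a) := by
    rw [ht]; simp [map_sub, map_add, map_smul, heh]; ring
  rw [h2, ht]
  module

lemma projA {k : ℕ} (a h : X) (hh : ‖h‖ = 1) (x : Fin k → X)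
    (hx : ∀ i, ∃ t : ℝ, x i = a + t • h)
    (e : X →L[ℝ] ℝ) (he : ‖e‖ = 1) (heh : e h = 1) (c : ℝ) (z : X) :
    ∑ i, (‖x i - (a + e (z - a) • h)‖ + c * e (x i - (a + e (z - a) • h)))
      ≤ ∑ i, (‖x i - z‖ + c * e (x i - z)) := by
  apply Finset.sum_le_sum
  intro i _
  rw [proj_term a h hh x hx e heh z i, norm_smul, map_smul, smul_eq_mul, heh, mul_one,
    Real.norm_eq_abs, hh, mul_one]
  have h3 : |e (x i - z)| ≤ ‖x i - z‖ := by
    calc |e (x i - z)| ≤ ‖e‖ * ‖x i - z‖ := e.le_opNorm _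
    _ = ‖x i - z‖ := by rw [he, one_mul]
  exact add_le_add h3 le_rfl

lemma minOnLine [StrictConvexSpace ℝ X] {k : ℕ} (hk : 1 ≤ k) (a h : X) (hh : ‖h‖ = 1)
    (x : Fin k → X) (hx : ∀ i, ∃ t : ℝ, x i = a + t • h)
    (e : X →L[ℝ] ℝ) (he : ‖e‖ = 1) (heh : e h = 1) (c : ℝ) (y : X)
    (hy : ∀ z, ∑ i, (‖x i - y‖ + c * e (x i - y)) ≤ ∑ i, (‖x i - z‖ + c * e (x i - z))) :
    ∃ t : ℝ, y = a + t • h := by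
  have habs : ∀ v : X, |e v| ≤ ‖v‖ := fun v => by
    calc |e v| ≤ ‖e‖ * ‖v‖ := e.le_opNorm _
    _ = ‖v‖ := by rw [he, one_mul]
  have key : ∀ i, ‖x i - y‖ = |e (x i - y)| := by
    by_contra hcon
    push_neg at hcon
    obtain ⟨j, hj⟩ := hcon
    have hw := hy (a + e (y - a) • h)
    have hterm : ∀ i : Fin k, ‖x i - (a + e (y - a) • h)‖ + c * e (x i - (a + e (y - a) • h))
        = |e (x i - y)| + c * e (x i - y) := by
      intro i
      rw [proj_term a h hh x hx e heh y i, norm_smul, map_smul, smul_eq_mul, heh, mul_one,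
        Real.norm_eq_abs, hh, mul_one]
    rw [Finset.sum_congr rfl (fun i _ => hterm i)] at hw
    have hlt : ∑ i, (|e (x i - y)| + c * e (x i - y))
        < ∑ i, (‖x i - y‖ + c * e (x i - y)) := by
      apply Finset.sum_lt_sum (fun i _ => add_le_add (habs _) le_rfl)
      exact ⟨j, Finset.mem_univ j, add_lt_add_of_lt_of_le (lt_of_le_of_ne (habs _) (fun hh' => hj hh'.symm)) le_rfl⟩
    exact lt_irrefl _ (lt_of_le_of_lt hw hlt)
  -- now use i = 0
  have hne : h ≠ 0 := by intro h0; rw [h0, norm_zero] at hh; norm_num at hh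
  set i0 : Fin k := ⟨0, hk⟩
  obtain ⟨t, ht⟩ := hx i0
  by_cases hv0 : x i0 - y = 0
  · exact ⟨t, by rw [← ht]; rw [sub_eq_zero] at hv0; exact hv0.symm⟩
  · set v := x i0 - y with hv
    have hvk : ‖v‖ = |e v| := key i0
    have main : ∀ w : X, w ≠ 0 → e w = ‖w‖ → ∃ r : ℝ, w = r • h := by
      intro w hw0 hew
      have h1 : ‖h + w‖ = ‖h‖ + ‖w‖ := by
        refine le_antisymm (norm_add_le _ _) ?_
        calc ‖h‖ + ‖w‖ = e (h + w) := by rw [map_add, heh, hew, hh]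
        _ ≤ |e (h + w)| := le_abs_self _
        _ ≤ ‖h + w‖ := habs _
      have hsr : SameRay ℝ h w := sameRay_iff_norm_add.mpr h1
      obtain ⟨r, hr0, hr⟩ := hsr.exists_nonneg_left hne
      exact ⟨r, hr.symm⟩
    have : ∃ r : ℝ, v = r • h := by
      rcases abs_cases (e v) with ⟨hc, _⟩ | ⟨hc, _⟩
      · exact main v hv0 (by rw [← hc, ← hvk])
      · obtain ⟨r, hr⟩ := main (-v) (neg_ne_zero.mpr hv0)
          (by rw [map_neg, norm_neg, ← hc, ← hvk])
        exact ⟨-r, by rw [neg_smul, ← hr, neg_neg]⟩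
    obtain ⟨r, hr⟩ := this
    refine ⟨t - r, ?_⟩
    have : y = x i0 - r • h := by rw [← hr, hv]; abel
    rw [this, ht]
    module
end aux

section main
variable {X : Type*} [NormedAddCommGroup X] [NormedSpace ℝ X] [StrictConvexSpace ℝ X]

lemma combinedLem {k : ℕ} (hk : 1 ≤ k) (a h : X) (hh : ‖h‖ = 1)
    (x : Fin k → X) (hx : ∀ i, ∃ t : ℝ, x i = a + t • h)
    (e : X →L[ℝ] ℝ) (he : ‖e‖ = 1) (heh : e h = 1) (c : ℝ) :
    {y : X | ∀ z : X, ∑ i, (‖x i - y‖ + c * e (x i - y))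
        ≤ ∑ i, (‖x i - z‖ + c * e (x i - z))}
      ⊆ {y : X | ∃ t : ℝ, y = a + t • h} ∧
    {y : X | ∀ z : X, ∑ i, (‖x i - y‖ + c * e (x i - y))
        ≤ ∑ i, (‖x i - z‖ + c * e (x i - z))}
      = {y : X | (∃ t : ℝ, y = a + t • h) ∧
        ∀ z : X, (∃ t : ℝ, z = a + t • h) →
          ∑ i, (‖x i - y‖ + c * e (x i - y)) ≤ ∑ i, (‖x i - z‖ + c * e (x i - z))} := by
  have hsub : {y : X | ∀ z : X, ∑ i, (‖x i - y‖ + c * e (x i - y))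
      ≤ ∑ i, (‖x i - z‖ + c * e (x i - z))} ⊆ {y : X | ∃ t : ℝ, y = a + t • h} :=
    fun y hy => minOnLine hk a h hh x hx e he heh c y hy
  refine ⟨hsub, ?_⟩
  ext y
  constructor
  · intro hy
    exact ⟨hsub hy, fun z _ => hy z⟩
  · rintro ⟨⟨t, hyt⟩, hmin⟩ z
    exact le_trans (hmin (a + e (z - a) • h) ⟨e (z - a), rfl⟩)
      (projA a h hh x hx e he heh c z)
end main



/-- If the points lie on a line `L` in a strictly convex Banach space, then (i) all
geometric medians lie on `L` and the minimization over `X` coincides with that over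
`L`; (ii) the same holds for geometric quantiles whose parameter satisfies `v = 0`,
i.e. `u = u(h) • e` with `e` a norming functional of the direction `h`. -/
theorem stmt11 {X : Type*} [NormedAddCommGroup X] [NormedSpace ℝ X] [CompleteSpace X]
    [StrictConvexSpace ℝ X]
    (k : ℕ) (hk : 1 ≤ k) (a h : X) (hh : ‖h‖ = 1) (x : Fin k → X)
    (hx : ∀ i, ∃ t : ℝ, x i = a + t • h) :
    (medianSet x ⊆ {y : X | ∃ t : ℝ, y = a + t • h} ∧
      medianSet x = {y : X | (∃ t : ℝ, y = a + t • h) ∧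
        ∀ z : X, (∃ t : ℝ, z = a + t • h) → ∑ i, ‖x i - y‖ ≤ ∑ i, ‖x i - z‖}) ∧
    (∀ u : X →L[ℝ] ℝ, ‖u‖ < 1 →
      (∃ e : X →L[ℝ] ℝ, ‖e‖ = 1 ∧ e h = 1 ∧ u = u h • e) →
      quantileSet u x ⊆ {y : X | ∃ t : ℝ, y = a + t • h} ∧
      quantileSet u x = {y : X | (∃ t : ℝ, y = a + t • h) ∧
        ∀ z : X, (∃ t : ℝ, z = a + t • h) →
          ∑ i, (‖x i - y‖ + u (x i - y)) ≤ ∑ i, (‖x i - z‖ + u (x i - z))}) := by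

  have hne : h ≠ 0 := by intro h0; rw [h0, norm_zero] at hh; norm_num at hh
  constructor
  · obtain ⟨e, he, heh⟩ := exists_dual_vector ℝ h (norm_ne_zero_iff.mpr hne)
    rw [hh] at heh
    have H := combinedLem hk a h hh x hx e he (by exact_mod_cast heh) 0
    simp only [zero_mul, add_zero] at H
    exact H
  · intro u hu ⟨e, he, heh, hue⟩
    have hueq : ∀ v : X, u h * e v = u v := by
      intro v; conv_rhs => rw [hue]
      simp
    have H := combinedLem hk a h hh x hx e he heh (u h)
    simp only [hueq] at H
    exact H
end

section
/- Let X be a real Banach space, k ≥ 1 an integer, x_1, …, x_k ∈ X, and u ∈ X* with ‖u‖_{X*} < 1. Let x* be a geometric quantile of x_1,…,x_k with parameter u (assumed to exist). Fix ν ∈ (0, (1 − ‖u‖_{X*})/2) and set C_ν := 2(1−ν)/(1 − 2ν − ‖u‖_{X*}). If z ∈ X and r > 0 satisfy ‖x* − z‖ > C_ν·r, then #{j ∈ {1,…,k} : ‖x_j − z‖ > r} > ν·k. -/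
/-- If `x*` is a geometric quantile of `x 1, …, x k` with parameter `u`, `ν ∈ (0, (1−‖u‖)/2)`,
and `‖x* − z‖ > C_ν r` with `C_ν = 2(1−ν)/(1−2ν−‖u‖)`, then more than `νk` of the points
satisfy `‖x j − z‖ > r`. -/
theorem stmt12 {X : Type*} [NormedAddCommGroup X] [NormedSpace ℝ X]
    (k : ℕ) (hk : 1 ≤ k) (x : Fin k → X) (u : X →L[ℝ] ℝ) (hu : ‖u‖ < 1)
    (xstar : X)
    (hxstar : ∀ z : X,
      ∑ i, (‖x i - xstar‖ + u (x i - xstar)) ≤ ∑ i, (‖x i - z‖ + u (x i - z)))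
    (ν : ℝ) (hν : ν ∈ Set.Ioo (0 : ℝ) ((1 - ‖u‖) / 2))
    (z : X) (r : ℝ) (hr : 0 < r)
    (hz : 2 * (1 - ν) / (1 - 2 * ν - ‖u‖) * r < ‖xstar - z‖) :
    ν * k < ({j : Fin k | r < ‖x j - z‖}.ncard : ℝ) := by
  by_contra hcon
  push_neg at hcon
  obtain ⟨hν0, hν2⟩ := hν
  have hu0 : (0:ℝ) ≤ ‖u‖ := norm_nonneg _
  set D := ‖xstar - z‖ with hD
  have hc : 0 < 1 - 2*ν - ‖u‖ := by linarith
  have hDr : 2*(1-ν)*r < (1 - 2*ν - ‖u‖) * D := by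
    rw [div_mul_eq_mul_div, div_lt_iff₀ hc] at hz
    nlinarith [hz]
  classical
  set S := Finset.univ.filter (fun j : Fin k => r < ‖x j - z‖) with hSdef
  have hm : ({j : Fin k | r < ‖x j - z‖}.ncard : ℝ) = (S.card : ℝ) := by
    rw [Set.ncard_eq_toFinset_card']
    simp [hSdef]
  rw [hm] at hcon
  -- per-term bounds
  have key : ∀ i : Fin k,
      (‖x i - z‖ + u (x i - z)) - (‖x i - xstar‖ + u (x i - xstar)) ≤
      (if i ∈ S then (1+‖u‖)*D else (1+‖u‖)*r - (1-‖u‖)*(D-r)) := by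
    intro i
    have e : (x i - z) - (x i - xstar) = xstar - z := by abel
    have h1 : ‖x i - z‖ - ‖x i - xstar‖ ≤ D := by
      have := norm_sub_norm_le (x i - z) (x i - xstar)
      rw [e] at this; exact this
    have h2 : u (x i - z) - u (x i - xstar) ≤ ‖u‖ * D := by
      have hm := u.le_opNorm (xstar - z)
      have : u (x i - z) - u (x i - xstar) = u (xstar - z) := by
        rw [← map_sub, e]
      rw [this]
      exact le_trans (le_abs_self _) hm
    by_cases hi : i ∈ S
    · simp only [hi, if_true]
      linarith
    · simp only [hi, if_false]
      have hiz : ‖x i - z‖ ≤ r := by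
        simpa [hSdef] using hi
      have h3 : D ≤ ‖x i - xstar‖ + ‖x i - z‖ := by
        have := norm_sub_le (xstar - x i) (z - x i)
        have e2 : (xstar - x i) - (z - x i) = xstar - z := by abel
        rw [e2] at this
        simpa [norm_sub_rev] using this
      have h4 : |u (x i - z)| ≤ ‖u‖ * ‖x i - z‖ := u.le_opNorm _
      have h5 : |u (x i - xstar)| ≤ ‖u‖ * ‖x i - xstar‖ := u.le_opNorm _
      have h4' := abs_le.mp h4
      have h5' := abs_le.mp h5
      have hA : ‖u‖ * ‖x i - z‖ ≤ ‖u‖ * r := mul_le_mul_of_nonneg_left hiz hu0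
      have hB : (1 - ‖u‖) * (D - r) ≤ (1 - ‖u‖) * ‖x i - xstar‖ :=
        mul_le_mul_of_nonneg_left (by linarith) (by linarith)
      nlinarith [h4'.1, h4'.2, h5'.1, h5'.2, hA, hB]
  have hsum0 : (0:ℝ) ≤ ∑ i, ((‖x i - z‖ + u (x i - z)) - (‖x i - xstar‖ + u (x i - xstar))) := by
    rw [Finset.sum_sub_distrib]
    have := hxstar z
    linarith
  have hsum1 : ∑ i, ((‖x i - z‖ + u (x i - z)) - (‖x i - xstar‖ + u (x i - xstar))) ≤
      ∑ i : Fin k, (if i ∈ S then (1+‖u‖)*D else (1+‖u‖)*r - (1-‖u‖)*(D-r)) :=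
    Finset.sum_le_sum (fun i _ => key i)
  have hcard : S.card ≤ k := by
    simpa using S.card_le_univ
  have hsum2 : ∑ i : Fin k, (if i ∈ S then (1+‖u‖)*D else (1+‖u‖)*r - (1-‖u‖)*(D-r)) =
      (S.card : ℝ) * ((1+‖u‖)*D) + ((k : ℝ) - S.card) * ((1+‖u‖)*r - (1-‖u‖)*(D-r)) := by
    rw [Finset.sum_ite, Finset.sum_const, Finset.sum_const, nsmul_eq_mul, nsmul_eq_mul,
      Finset.filter_mem_eq_inter, Finset.univ_inter]
    have hcompl : (Finset.univ.filter (fun i => ¬ i ∈ S)).card = k - S.card := by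
      rw [Finset.filter_not, Finset.card_sdiff_of_subset]
      · simp [hSdef]
      · exact Finset.filter_subset _ _
    rw [hcompl, Nat.cast_sub hcard]
  rw [hsum2] at hsum1
  have h0 : (0:ℝ) ≤ (S.card : ℝ) * ((1+‖u‖)*D) +
      ((k : ℝ) - S.card) * ((1+‖u‖)*r - (1-‖u‖)*(D-r)) := le_trans hsum0 hsum1
  have hK1 : (1:ℝ) ≤ (k:ℝ) := by exact_mod_cast hk
  have hDgtr : r < D := by nlinarith
  have h5 : (0:ℝ) ≤ (ν*(k:ℝ) - S.card) * (D - r) :=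
    mul_nonneg (by linarith) (by linarith)
  have h6 : (0:ℝ) < (k:ℝ) * ((1 - 2*ν - ‖u‖)*D - 2*(1-ν)*r) :=
    mul_pos (by linarith) (by linarith)
  nlinarith [h0, h5, h6]
end

section
/- Let X be a real separable Banach space, (Ω, 𝓕, ℙ) a probability space, μ ∈ X, and let μ̂_1, …, μ̂_k : Ω → X be mutually independent Borel-measurable random variables. Let u ∈ X* with ‖u‖_{X*} < 1, fix ν ∈ (0, (1 − ‖u‖_{X*})/2) and set C_ν := 2(1−ν)/(1 − 2ν − ‖u‖_{X*}). Let μ̂ : Ω → X be a random variable such that, almost surely, μ̂(ω) is a geometric quantile of μ̂_1(ω), …, μ̂_k(ω) with parameter u. (a) If 0 < p < ν and ε > 0 are such that ℙ(‖μ̂_j − μ‖ > ε) ≤ p for all j = 1, …, k, then ℙ(‖μ̂ − μ‖ > C_ν ε) ≤ exp(−k ψ(ν; p)), where ψ(s; p) := (1−s) log((1−s)/(1−p)) + s log(s/p). (b) If instead ℙ(‖μ̂_j − μ‖ > ε) ≤ p holds only for j in a subset J ⊆ {1,…,k} with |J| = (1−τ)k for some 0 ≤ τ ≤ (ν−p)/(1−p),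 then ℙ(‖μ̂ − μ‖ > C_ν ε) ≤ exp(−k(1−τ) ψ((ν−τ)/(1−τ); p)). -/
open MeasureTheory ProbabilityTheory Real

set_option maxHeartbeats 1000000

/-- `ψ(s; p) = (1−s) log((1−s)/(1−p)) + s log(s/p)`. -/
noncomputable def psiRate (s p : ℝ) : ℝ :=
  (1 - s) * Real.log ((1 - s) / (1 - p)) + s * Real.log (s / p)

section
variable {X : Type*} [NormedAddCommGroup X] [NormedSpace ℝ X]

lemma detLem {X : Type*} [NormedAddCommGroup X] [NormedSpace ℝ X]
    {k : ℕ} (hk : 1 ≤ k) (x : Fin k → X) (μ y : X)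
    (u : X →L[ℝ] ℝ)
    {ν ε : ℝ} (hν0 : 0 < ν) (hν2 : ν < (1 - ‖u‖) / 2) (hε : 0 < ε)
    (hmin : ∑ j, (‖x j - y‖ + u (x j - y)) ≤ ∑ j, (‖x j - μ‖ + u (x j - μ)))
    (hr : 2 * (1 - ν) / (1 - 2 * ν - ‖u‖) * ε < ‖y - μ‖) :
    ν * k < ((Finset.univ.filter (fun j => ε < ‖x j - μ‖)).card : ℝ) := by
  classical
  have hU0 : (0:ℝ) ≤ ‖u‖ := norm_nonneg u
  have hD0 : (0:ℝ) < 1 - 2 * ν - ‖u‖ := by linarith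
  have hr0 : (0:ℝ) ≤ ‖y - μ‖ := norm_nonneg _
  have key : 2 * (1 - ν) * ε < (1 - 2 * ν - ‖u‖) * ‖y - μ‖ := by
    rw [div_mul_eq_mul_div, div_lt_iff₀ hD0] at hr
    linarith
  by_contra hB
  push_neg at hB
  set s := Finset.univ.filter (fun j => ε < ‖x j - μ‖) with hs
  have hterm : ∀ j, (‖x j - μ‖ + u (x j - μ)) - (‖x j - y‖ + u (x j - y))
      = ‖x j - μ‖ - ‖x j - y‖ + u (y - μ) := by
    intro j
    have h : u (x j - μ) - u (x j - y) = u (y - μ) := by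
      rw [← map_sub]; congr 1; abel
    linarith
  have huy : u (y - μ) ≤ ‖u‖ * ‖y - μ‖ :=
    (le_abs_self _).trans (by rw [← Real.norm_eq_abs]; exact u.le_opNorm _)
  -- bound for bad indices
  have hbad : ∀ j ∈ s, (‖x j - μ‖ + u (x j - μ)) - (‖x j - y‖ + u (x j - y))
      ≤ (1 + ‖u‖) * ‖y - μ‖ := by
    intro j _
    rw [hterm j]
    have h2 : ‖x j - μ‖ - ‖x j - y‖ ≤ ‖y - μ‖ := by
      have he : (x j - μ) - (x j - y) = y - μ := by abel
      calc ‖x j - μ‖ - ‖x j - y‖ ≤ ‖(x j - μ) - (x j - y)‖ := norm_sub_norm_le _ _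
        _ = ‖y - μ‖ := by rw [he]
    nlinarith
  -- bound for good indices
  have hgood : ∀ j ∈ Finset.univ.filter (fun j => ¬ ε < ‖x j - μ‖),
      (‖x j - μ‖ + u (x j - μ)) - (‖x j - y‖ + u (x j - y))
      ≤ 2 * ε - (1 - ‖u‖) * ‖y - μ‖ := by
    intro j hj
    rw [Finset.mem_filter] at hj
    have hje : ‖x j - μ‖ ≤ ε := le_of_not_gt hj.2
    rw [hterm j]
    have h1 : ‖y - μ‖ ≤ ‖x j - μ‖ + ‖x j - y‖ := by
      have he : y - μ = (x j - μ) - (x j - y) := by abel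
      rw [he]; exact norm_sub_le _ _
    nlinarith
  have hsum0 : (0:ℝ) ≤ ∑ j, ((‖x j - μ‖ + u (x j - μ)) - (‖x j - y‖ + u (x j - y))) := by
    rw [Finset.sum_sub_distrib]
    linarith
  have hsplit : ∑ j, ((‖x j - μ‖ + u (x j - μ)) - (‖x j - y‖ + u (x j - y)))
      = ∑ j ∈ s, ((‖x j - μ‖ + u (x j - μ)) - (‖x j - y‖ + u (x j - y)))
        + ∑ j ∈ Finset.univ.filter (fun j => ¬ ε < ‖x j - μ‖),
          ((‖x j - μ‖ + u (x j - μ)) - (‖x j - y‖ + u (x j - y))) :=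
    (Finset.sum_filter_add_sum_filter_not _ _ _).symm
  have hcard : s.card + (Finset.univ.filter (fun j => ¬ ε < ‖x j - μ‖)).card = k := by
    rw [hs, Finset.card_filter_add_card_filter_not]
    simp
  have hb1 : ∑ j ∈ s, ((‖x j - μ‖ + u (x j - μ)) - (‖x j - y‖ + u (x j - y)))
      ≤ (s.card : ℝ) * ((1 + ‖u‖) * ‖y - μ‖) := by
    calc _ ≤ ∑ _j ∈ s, (1 + ‖u‖) * ‖y - μ‖ := Finset.sum_le_sum hbad
      _ = (s.card : ℝ) * ((1 + ‖u‖) * ‖y - μ‖) := by rw [Finset.sum_const, nsmul_eq_mul]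
  have hb2 : ∑ j ∈ Finset.univ.filter (fun j => ¬ ε < ‖x j - μ‖),
      ((‖x j - μ‖ + u (x j - μ)) - (‖x j - y‖ + u (x j - y)))
      ≤ ((Finset.univ.filter (fun j => ¬ ε < ‖x j - μ‖)).card : ℝ)
        * (2 * ε - (1 - ‖u‖) * ‖y - μ‖) := by
    calc _ ≤ ∑ _j ∈ Finset.univ.filter (fun j => ¬ ε < ‖x j - μ‖),
        (2 * ε - (1 - ‖u‖) * ‖y - μ‖) := Finset.sum_le_sum hgood
      _ = _ := by rw [Finset.sum_const, nsmul_eq_mul]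
  -- now arithmetic
  have hcardR : ((Finset.univ.filter (fun j => ¬ ε < ‖x j - μ‖)).card : ℝ)
      = (k : ℝ) - (s.card : ℝ) := by
    have := hcard
    push_cast [← this]
    ring
  rw [hcardR] at hb2
  have hk1 : (1:ℝ) ≤ (k:ℝ) := by exact_mod_cast hk
  have h1u : (0:ℝ) < 1 - ‖u‖ := by linarith
  have hc : 2 * ε - (1 - ‖u‖) * ‖y - μ‖ < 0 := by
    nlinarith [mul_lt_mul_of_pos_left key h1u, mul_pos hν0 hε, mul_nonneg hU0 hε.le, hD0,
      mul_pos (mul_pos hν0 hε) (show (0:ℝ) < 1 + ‖u‖ by linarith)]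
  have hd : 0 ≤ (1 + ‖u‖) * ‖y - μ‖ := by positivity
  have h1 : (s.card : ℝ) * ((1 + ‖u‖) * ‖y - μ‖) ≤ ν * k * ((1 + ‖u‖) * ‖y - μ‖) :=
    mul_le_mul_of_nonneg_right hB hd
  have h2 : ((k:ℝ) - s.card) * (2 * ε - (1 - ‖u‖) * ‖y - μ‖)
      ≤ (1 - ν) * k * (2 * ε - (1 - ‖u‖) * ‖y - μ‖) := by
    apply mul_le_mul_of_nonpos_right _ hc.le
    linarith
  nlinarith [hsum0, hsplit, hb1, hb2, h1, h2, key, hk1, mul_pos (show (0:ℝ) < (k:ℝ) by linarith) (show (0:ℝ) < (1 - 2*ν - ‖u‖) * ‖y - μ‖ - 2*(1-ν)*ε by linarith)]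


lemma masterLem [MeasurableSpace X] [BorelSpace X]
    {Ω : Type*} [MeasurableSpace Ω] (P : Measure Ω) [IsProbabilityMeasure P]
    (μ : X) (k : ℕ) (hk : 1 ≤ k)
    (muhat : Fin k → Ω → X) (hmeas : ∀ j, Measurable (muhat j))
    (hindep : ProbabilityTheory.iIndepFun muhat P)
    (u : X →L[ℝ] ℝ) (hu : ‖u‖ < 1)
    (ν : ℝ) (hν : ν ∈ Set.Ioo (0 : ℝ) ((1 - ‖u‖) / 2))
    (est : Ω → X)
    (hq : ∀ᵐ ω ∂P, ∀ y : X,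
      ∑ j, (‖muhat j ω - est ω‖ + u (muhat j ω - est ω)) ≤
        ∑ j, (‖muhat j ω - y‖ + u (muhat j ω - y)))
    (p ε τ : ℝ) (hp : 0 < p) (hpν : p < ν) (hε : 0 < ε) (hτ0 : 0 ≤ τ)
    (hτ : τ ≤ (ν - p) / (1 - p)) (J : Finset (Fin k)) (hJ : (J.card : ℝ) = (1 - τ) * k)
    (hPj : ∀ j ∈ J, P {ω | ε < ‖muhat j ω - μ‖} ≤ ENNReal.ofReal p) :
    P {ω | 2 * (1 - ν) / (1 - 2 * ν - ‖u‖) * ε < ‖est ω - μ‖} ≤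
      ENNReal.ofReal (Real.exp (-(k : ℝ) * (1 - τ) * psiRate ((ν - τ) / (1 - τ)) p)) := by
  classical
  obtain ⟨hν0, hν2⟩ := hν
  have hU0 : (0:ℝ) ≤ ‖u‖ := norm_nonneg u
  have hν1 : ν < 1/2 := by linarith
  have hp1 : (0:ℝ) < 1 - p := by linarith
  have hτ1 : τ < 1 := by
    have := (le_div_iff₀ hp1).mp hτ
    nlinarith
  have h1τ : (0:ℝ) < 1 - τ := by linarith
  set ν' : ℝ := (ν - τ) / (1 - τ) with hν'def
  have hpν' : p ≤ ν' := by
    rw [hν'def, le_div_iff₀ h1τ]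
    have := (le_div_iff₀ hp1).mp hτ
    nlinarith
  have hν'0 : 0 < ν' := lt_of_lt_of_le hp hpν'
  have hν'1 : ν' < 1 := by
    rw [hν'def, div_lt_one h1τ]; linarith
  have h1ν' : (0:ℝ) < 1 - ν' := by linarith
  set t : ℝ := Real.log (ν' * (1 - p) / (p * (1 - ν'))) with htdef
  have hargpos : 0 < ν' * (1 - p) / (p * (1 - ν')) := by positivity
  have ht0 : 0 ≤ t := by
    rw [htdef]
    apply Real.log_nonneg
    rw [le_div_iff₀ (by positivity)]
    nlinarith
  have het : Real.exp t = ν' * (1 - p) / (p * (1 - ν')) := Real.exp_log hargpos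
  have het1 : (1:ℝ) ≤ Real.exp t := Real.one_le_exp ht0
  -- the indicator random variables
  set Sset : Set X := {x | ε < ‖x - μ‖} with hSsetdef
  have hSopen : IsOpen Sset := by
    have : Continuous fun x : X => ‖x - μ‖ := (continuous_id.sub continuous_const).norm
    exact isOpen_lt continuous_const this
  have hSmeas : MeasurableSet Sset := hSopen.measurableSet
  set g : X → ℝ := Sset.indicator (fun _ => 1) with hgdef
  have hg : Measurable g := measurable_const.indicator hSmeas
  set Xv : Fin k → Ω → ℝ := fun j ω => g (muhat j ω) with hXvdef
  have hXmeas : ∀ j, Measurable (Xv j) := fun j => hg.comp (hmeas j)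
  have hXindep : iIndepFun Xv P :=
    hindep.comp (fun _ => g) (fun _ => hg)
  set A : Fin k → Set Ω := fun j => muhat j ⁻¹' Sset with hAdef
  have hAmeas : ∀ j, MeasurableSet (A j) := fun j => (hmeas j) hSmeas
  have hX01 : ∀ j ω, Xv j ω = if ω ∈ A j then 1 else 0 := by
    intro j ω
    simp [hXvdef, hgdef, hAdef, Set.indicator_apply, Set.mem_preimage]
  have hAeq : ∀ j, A j = {ω | ε < ‖muhat j ω - μ‖} := fun j => rfl
  -- mgf bounds
  have hexp_eq : ∀ j, (fun ω => Real.exp (t * Xv j ω))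
      = fun ω => (A j).indicator (fun _ => Real.exp t - 1) ω + 1 := by
    intro j
    funext ω
    by_cases h : ω ∈ A j <;> simp [hX01 j ω, h, Set.indicator_apply]
  have hq_le : ∀ j ∈ J, (P (A j)).toReal ≤ p := by
    intro j hj
    exact ENNReal.toReal_le_of_le_ofReal hp.le (by rw [hAeq]; exact hPj j hj)
  have hmgf : ∀ j ∈ J, mgf (Xv j) P t ≤ 1 - p + p * Real.exp t := by
    intro j hj
    have : mgf (Xv j) P t = (P (A j)).toReal * (Real.exp t - 1) + 1 := by
      rw [mgf, hexp_eq j, integral_add (((integrable_const _).indicator (hAmeas j))) (integrable_const 1),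
        integral_indicator_const _ (hAmeas j), integral_const]
      simp [smul_eq_mul, measureReal_def]
    rw [this]
    have h0 : (0:ℝ) ≤ (P (A j)).toReal := ENNReal.toReal_nonneg
    nlinarith [hq_le j hj]
  -- Chernoff
  set S : Ω → ℝ := ∑ j ∈ J, Xv j with hSdef
  have hSapp : S = fun ω => ∑ j ∈ J, Xv j ω := by
    funext ω; rw [hSdef, Finset.sum_apply]
  have hSmeas' : Measurable S := by
    rw [hSapp]; exact Finset.measurable_sum J (fun j _ => hXmeas j)
  have hSle : ∀ ω, S ω ≤ (J.card : ℝ) := by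
    intro ω
    rw [hSdef, Finset.sum_apply]
    calc ∑ j ∈ J, Xv j ω ≤ ∑ j ∈ J, 1 := by
          refine Finset.sum_le_sum fun j _ => ?_
          rw [hX01]; split <;> norm_num
      _ = (J.card : ℝ) := by simp
  have hSint : Integrable (fun ω => Real.exp (t * S ω)) P := by
    refine Integrable.mono' (integrable_const (Real.exp (t * (J.card : ℝ))))
      ((hSmeas'.const_mul t).exp.aestronglyMeasurable) (ae_of_all _ fun ω => ?_)
    rw [Real.norm_eq_abs, abs_of_pos (Real.exp_pos _)]
    exact Real.exp_le_exp.mpr (mul_le_mul_of_nonneg_left (hSle ω) ht0)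
  set a : ℝ := (ν - τ) * k with hadef
  have chern : (P {ω | a ≤ S ω}).toReal ≤ Real.exp (-t * a) * mgf S P t :=
    measure_ge_le_exp_mul_mgf a ht0 hSint
  have hmgfS : mgf S P t = ∏ j ∈ J, mgf (Xv j) P t := hXindep.mgf_sum hXmeas J
  have hbase : 1 - p + p * Real.exp t = (1 - p) / (1 - ν') := by
    rw [het]; field_simp; ring
  have hbasepos : (0:ℝ) < (1 - p) / (1 - ν') := by positivity
  have hprod : mgf S P t ≤ ((1 - p) / (1 - ν')) ^ J.card := by
    rw [hmgfS]
    calc ∏ j ∈ J, mgf (Xv j) P t ≤ ∏ _j ∈ J, ((1 - p) / (1 - ν')) := by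
          refine Finset.prod_le_prod (fun j _ => mgf_nonneg) (fun j hj => ?_)
          rw [← hbase]; exact hmgf j hj
      _ = ((1 - p) / (1 - ν')) ^ J.card := Finset.prod_const _
  -- rewrite the Chernoff RHS as the target exponential
  have hRHS : Real.exp (-t * a) * ((1 - p) / (1 - ν')) ^ J.card
      = Real.exp (-(k : ℝ) * (1 - τ) * psiRate ν' p) := by
    rw [← Real.exp_log (pow_pos hbasepos J.card), Real.log_pow, ← Real.exp_add]
    congr 1
    have hlogb : Real.log ((1 - p) / (1 - ν')) = Real.log (1 - p) - Real.log (1 - ν') :=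
      Real.log_div (by linarith) (by linarith)
    have hlogt : t = Real.log ν' + Real.log (1 - p) - (Real.log p + Real.log (1 - ν')) := by
      rw [htdef, Real.log_div (by positivity) (by positivity),
        Real.log_mul (by positivity) (by positivity), Real.log_mul (by positivity) (by positivity)]
    have hnt : ν - τ = ν' * (1 - τ) := by
      rw [hν'def]; field_simp
    have hpsi : psiRate ν' p = (1 - ν') * (Real.log (1 - ν') - Real.log (1 - p))
        + ν' * (Real.log ν' - Real.log p) := by
      rw [psiRate, Real.log_div (by linarith) (by linarith),
        Real.log_div (by positivity) (by positivity)]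
    rw [hJ, hadef, hnt, hlogb, hlogt, hpsi]
    ring
  -- almost-sure inclusion of events
  have hsub : {ω | 2 * (1 - ν) / (1 - 2 * ν - ‖u‖) * ε < ‖est ω - μ‖} ≤ᵐ[P] {ω | a ≤ S ω} := by
    filter_upwards [hq] with ω hω hmem
    have hdet := detLem hk (fun j => muhat j ω) μ (est ω) u hν0 hν2 hε (hω μ) hmem
    have hall : ∑ j, Xv j ω = ((Finset.univ.filter (fun j => ε < ‖muhat j ω - μ‖)).card : ℝ) := by
      calc ∑ j, Xv j ω = ∑ j, if ε < ‖muhat j ω - μ‖ then (1:ℝ) else 0 := by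
            refine Finset.sum_congr rfl fun j _ => ?_
            rw [hX01]; rfl
        _ = _ := by rw [Finset.sum_boole]
    have hcs : ((Finset.univ \ J).card : ℝ) = τ * k := by
      have hJk : J.card ≤ k := by simpa using Finset.card_le_univ J
      rw [Finset.card_sdiff_of_subset (Finset.subset_univ J), Finset.card_univ, Fintype.card_fin,
        Nat.cast_sub hJk, hJ]
      ring
    have hsdiff : ∑ j ∈ Finset.univ \ J, Xv j ω ≤ τ * k := by
      calc ∑ j ∈ Finset.univ \ J, Xv j ω ≤ ∑ _j ∈ Finset.univ \ J, 1 := by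
            refine Finset.sum_le_sum fun j _ => ?_
            rw [hX01]; split <;> norm_num
        _ = ((Finset.univ \ J).card : ℝ) := by simp
        _ = τ * k := hcs
    have hsplit : ∑ j ∈ Finset.univ \ J, Xv j ω + ∑ j ∈ J, Xv j ω = ∑ j, Xv j ω :=
      Finset.sum_sdiff (Finset.subset_univ J)
    have hSω : S ω = ∑ j ∈ J, Xv j ω := by rw [hSdef, Finset.sum_apply]
    show a ≤ S ω
    rw [hSω, hadef]
    have := hall ▸ hsplit
    nlinarith [hdet, hsdiff]
  calc P {ω | 2 * (1 - ν) / (1 - 2 * ν - ‖u‖) * ε < ‖est ω - μ‖}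
      ≤ P {ω | a ≤ S ω} := measure_mono_ae hsub
    _ = ENNReal.ofReal ((P {ω | a ≤ S ω}).toReal) := (ENNReal.ofReal_toReal (measure_ne_top P _)).symm
    _ ≤ ENNReal.ofReal (Real.exp (-(k : ℝ) * (1 - τ) * psiRate ν' p)) := by
        apply ENNReal.ofReal_le_ofReal
        rw [← hRHS]
        exact chern.trans (mul_le_mul_of_nonneg_left hprod (Real.exp_nonneg _))

end

/-- Concentration of a geometric quantile of independent estimators around the target,
in a separable Banach space (quantile analogue of Minsker's Theorem 3.1): part (a) when all
estimators concentrate, part (b) when only a `(1−τ)`-fraction of them concentrate. -/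
theorem stmt13 {X : Type*} [NormedAddCommGroup X] [NormedSpace ℝ X] [CompleteSpace X]
    [TopologicalSpace.SeparableSpace X] [MeasurableSpace X] [BorelSpace X]
    {Ω : Type*} [MeasurableSpace Ω] (P : MeasureTheory.Measure Ω) [IsProbabilityMeasure P]
    (μ : X) (k : ℕ) (hk : 1 ≤ k)
    (muhat : Fin k → Ω → X) (hmeas : ∀ j, Measurable (muhat j))
    (hindep : ProbabilityTheory.iIndepFun muhat P)
    (u : X →L[ℝ] ℝ) (hu : ‖u‖ < 1)
    (ν : ℝ) (hν : ν ∈ Set.Ioo (0 : ℝ) ((1 - ‖u‖) / 2))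
    (est : Ω → X)
    (hq : ∀ᵐ ω ∂P, ∀ y : X,
      ∑ j, (‖muhat j ω - est ω‖ + u (muhat j ω - est ω)) ≤
        ∑ j, (‖muhat j ω - y‖ + u (muhat j ω - y))) :
    (∀ p ε : ℝ, 0 < p → p < ν → 0 < ε →
      (∀ j, P {ω | ε < ‖muhat j ω - μ‖} ≤ ENNReal.ofReal p) →
      P {ω | 2 * (1 - ν) / (1 - 2 * ν - ‖u‖) * ε < ‖est ω - μ‖} ≤
        ENNReal.ofReal (Real.exp (-(k : ℝ) * psiRate ν p))) ∧
    (∀ p ε τ : ℝ, 0 < p → p < ν → 0 < ε → 0 ≤ τ → τ ≤ (ν - p) / (1 - p) →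
      ∀ J : Finset (Fin k), (J.card : ℝ) = (1 - τ) * k →
      (∀ j ∈ J, P {ω | ε < ‖muhat j ω - μ‖} ≤ ENNReal.ofReal p) →
      P {ω | 2 * (1 - ν) / (1 - 2 * ν - ‖u‖) * ε < ‖est ω - μ‖} ≤
        ENNReal.ofReal (Real.exp (-(k : ℝ) * (1 - τ) * psiRate ((ν - τ) / (1 - τ)) p))) := by
  obtain ⟨hν0, hν2⟩ := hν
  constructor
  · intro p ε hp hpν hε hPj
    have h := masterLem P μ k hk muhat hmeas hindep u hu ν ⟨hν0, hν2⟩ est hq p ε 0 hp hpν hε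
      le_rfl (div_nonneg (by linarith) (by nlinarith [norm_nonneg u])) Finset.univ
      (by simp [Finset.card_univ]) (fun j _ => hPj j)
    simpa using h
  · intro p ε τ hp hpν hε hτ0 hτ J hJ hPj
    exact masterLem P μ k hk muhat hmeas hindep u hu ν ⟨hν0, hν2⟩ est hq p ε τ hp hpν hε hτ0 hτ J hJ hPj
end

section
/- Let H be a real Hilbert space, k ≥ 1 an integer, x_1, …, x_k ∈ H, and u ∈ H with ‖u‖ < 1 (identifying H with its dual). Let y* be any geometric quantile of x_1,…,x_k with parameter u, i.e. a minimizer over y ∈ H of Σ_{i=1}^k (‖x_i − y‖ + ⟨u, x_i − y⟩). Then there exist w*_1, …, w*_{k+1} ∈ [0,1] with w*_1 + ⋯ + w*_{k+1} = 1 and w*_{k+1} < 1 such that y* = (1/(1 − w*_{k+1}))·(Σ_{i=1}^k w*_i x_i + w*_{k+1} u). Moreover, if y* ≠ x_i for all i = 1,…,k, one may take w*_i = ‖x_i − y*‖^{−1} / (Σ_{j=1}^k ‖x_j − y*‖^{−1} + k) for i = 1,…,k and w*_{k+1} = k / (Σ_{j=1}^k ‖x_j − y*‖^{−1} + k). -/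
open Finset

lemma aux_norm_fderiv {H : Type*} [NormedAddCommGroup H] [InnerProductSpace ℝ H]
    {v : H} (hv : v ≠ 0) :
    HasFDerivAt (fun z : H => ‖z‖) (‖v‖⁻¹ • innerSL ℝ v) v := by
  have h1 : HasFDerivAt (fun z : H => ‖z‖ ^ 2) (2 • innerSL ℝ v) v :=
    (hasStrictFDerivAt_norm_sq v).hasFDerivAt
  have hne : (‖v‖ : ℝ) ^ 2 ≠ 0 := pow_ne_zero 2 (norm_ne_zero_iff.mpr hv)
  have h2 := h1.sqrt hne
  have hfun : (fun y : H => Real.sqrt (‖y‖ ^ 2)) = fun y : H => ‖y‖ := by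
    funext y; exact Real.sqrt_sq (norm_nonneg y)
  have hsq : Real.sqrt (‖v‖ ^ 2) = ‖v‖ := Real.sqrt_sq (norm_nonneg v)
  rw [hfun, hsq] at h2
  convert h2 using 1
  have h3 : ‖v‖ ≠ 0 := norm_ne_zero_iff.mpr hv
  ext w
  simp [ContinuousLinearMap.smul_apply, smul_smul]
  field_simp

lemma aux_grad_zero {H : Type*} [NormedAddCommGroup H] [InnerProductSpace ℝ H]
    (k : ℕ) (x : Fin k → H) (u : H) (ystar : H)
    (hmin : ∀ z : H,
      ∑ i, (‖x i - ystar‖ + (inner ℝ u (x i - ystar) : ℝ)) ≤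
        ∑ i, (‖x i - z‖ + (inner ℝ u (x i - z) : ℝ)))
    (hne : ∀ i, ystar ≠ x i) :
    (∑ i, ‖x i - ystar‖⁻¹ • (x i - ystar)) + (k : ℝ) • u = 0 := by
  set v : Fin k → H := fun i => x i - ystar with hv
  have hvne : ∀ i, v i ≠ 0 := fun i => sub_ne_zero.mpr fun h => hne i h.symm
  have hg : ∀ i : Fin k, HasFDerivAt (fun z : H => x i - z)
      (-(ContinuousLinearMap.id ℝ H)) ystar := by
    intro i
    have h0 : HasFDerivAt (fun z : H => x i - z)
        ((0 : H →L[ℝ] H) - ContinuousLinearMap.id ℝ H) ystar :=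
      HasFDerivAt.sub (hasFDerivAt_const _ _) (hasFDerivAt_id _)
    simpa [zero_sub] using h0
  have hnorm : ∀ i : Fin k, HasFDerivAt (fun z : H => ‖x i - z‖)
      ((‖v i‖⁻¹ • innerSL ℝ (v i)).comp (-(ContinuousLinearMap.id ℝ H))) ystar :=
    fun i => (aux_norm_fderiv (hvne i)).comp ystar (hg i)
  have hinner : ∀ i : Fin k, HasFDerivAt (fun z : H => (inner ℝ u (x i - z) : ℝ))
      ((innerSL ℝ u).comp (-(ContinuousLinearMap.id ℝ H))) ystar :=
    fun i => ((innerSL ℝ u).hasFDerivAt).comp ystar (hg i)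
  have hF : HasFDerivAt (fun z : H => ∑ i, (‖x i - z‖ + (inner ℝ u (x i - z) : ℝ)))
      (∑ i, ((‖v i‖⁻¹ • innerSL ℝ (v i)).comp (-(ContinuousLinearMap.id ℝ H)) +
        (innerSL ℝ u).comp (-(ContinuousLinearMap.id ℝ H)))) ystar :=
    HasFDerivAt.fun_sum fun i _ => (hnorm i).add (hinner i)
  have hloc : IsLocalMin (fun z : H => ∑ i, (‖x i - z‖ + (inner ℝ u (x i - z) : ℝ))) ystar :=
    Filter.Eventually.of_forall hmin
  have hzero := hloc.hasFDerivAt_eq_zero hF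
  set g0 : H := (∑ i, ‖v i‖⁻¹ • v i) + (k : ℝ) • u with hg0
  have happ := congrArg (fun L => L (-g0)) hzero
  simp only [ContinuousLinearMap.sum_apply, ContinuousLinearMap.add_apply,
    ContinuousLinearMap.comp_apply, ContinuousLinearMap.neg_apply,
    ContinuousLinearMap.id_apply, neg_neg, ContinuousLinearMap.smul_apply,
    innerSL_apply_apply, ContinuousLinearMap.zero_apply, smul_eq_mul] at happ
  have hinner0 : (inner ℝ g0 g0 : ℝ) = 0 := by
    rw [hg0]
    rw [inner_add_left, sum_inner, real_inner_smul_left]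
    rw [← happ]
    simp only [real_inner_smul_left]
    rw [Finset.sum_add_distrib, Finset.sum_const, card_univ, Fintype.card_fin]
    simp [real_inner_smul_left, nsmul_eq_mul]
    rfl
  have : g0 = 0 := inner_self_eq_zero.mp hinner0
  simpa [hg0] using this

/-- In a real Hilbert space, any geometric quantile `y*` of `x 1, …, x k` with
parameter `u` (`‖u‖ < 1`) is a convex-weights combination
`y* = (1/(1−w_{k+1})) (∑ i w_i x_i + w_{k+1} u)`; moreover if `y* ≠ x i` for all `i`
the weights can be taken as in Gervini's representation. -/
theorem stmt16 {H : Type*} [NormedAddCommGroup H] [InnerProductSpace ℝ H]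
    (k : ℕ) (hk : 1 ≤ k) (x : Fin k → H) (u : H) (hu : ‖u‖ < 1)
    (ystar : H)
    (hmin : ∀ z : H,
      ∑ i, (‖x i - ystar‖ + (inner ℝ u (x i - ystar) : ℝ)) ≤
        ∑ i, (‖x i - z‖ + (inner ℝ u (x i - z) : ℝ))) :
    (∃ (w : Fin k → ℝ) (wlast : ℝ),
      (∀ i, w i ∈ Set.Icc (0 : ℝ) 1) ∧ wlast ∈ Set.Icc (0 : ℝ) 1 ∧ wlast < 1 ∧
      (∑ i, w i) + wlast = 1 ∧
      ystar = (1 / (1 - wlast)) • ((∑ i, w i • x i) + wlast • u)) ∧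
    ((∀ i, ystar ≠ x i) →
      ystar = (1 / (1 - (k : ℝ) / ((∑ j, ‖x j - ystar‖⁻¹) + k))) •
        ((∑ i, (‖x i - ystar‖⁻¹ / ((∑ j, ‖x j - ystar‖⁻¹) + k)) • x i) +
          ((k : ℝ) / ((∑ j, ‖x j - ystar‖⁻¹) + k)) • u)) := by
  have hform : (∀ i, ystar ≠ x i) →
      ystar = (1 / (1 - (k : ℝ) / ((∑ j, ‖x j - ystar‖⁻¹) + k))) •
        ((∑ i, (‖x i - ystar‖⁻¹ / ((∑ j, ‖x j - ystar‖⁻¹) + k)) • x i) +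
          ((k : ℝ) / ((∑ j, ‖x j - ystar‖⁻¹) + k)) • u) := by
    intro hne
    set a : Fin k → ℝ := fun i => ‖x i - ystar‖⁻¹ with ha
    set S : ℝ := ∑ j, a j with hSdef
    set T : ℝ := S + k with hTdef
    have hapos : ∀ i, 0 < a i := fun i =>
      inv_pos.mpr (norm_pos_iff.mpr (sub_ne_zero.mpr fun h => hne i h.symm))
    have hSpos : 0 < S :=
      Finset.sum_pos (fun i _ => hapos i) (Finset.univ_nonempty_iff.mpr ⟨⟨0, hk⟩⟩)
    have hTpos : 0 < T := by
      have : (0:ℝ) ≤ k := Nat.cast_nonneg k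
      linarith
    have hgz := aux_grad_zero k x u ystar hmin hne
    have hkey : S • ystar = (∑ i, a i • x i) + (k : ℝ) • u := by
      have h1 : (∑ i, a i • (x i - ystar)) = (∑ i, a i • x i) - S • ystar := by
        rw [hSdef, Finset.sum_smul]
        rw [← Finset.sum_sub_distrib]
        congr 1; funext i; rw [smul_sub]
      rw [h1] at hgz
      have h2 : S • ystar - ((∑ i, a i • x i) + (k : ℝ) • u) =
          -(((∑ i, a i • x i) - S • ystar) + (k : ℝ) • u) := by abel
      rw [hgz, neg_zero] at h2
      exact eq_of_sub_eq_zero h2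
    have hkey2 : ystar = S⁻¹ • ((∑ i, a i • x i) + (k : ℝ) • u) := by
      rw [← hkey, inv_smul_smul₀ hSpos.ne']
    have hsum : (∑ i, (a i / T) • x i) = T⁻¹ • ∑ i, a i • x i := by
      rw [Finset.smul_sum]
      congr 1; funext i
      rw [smul_smul, div_eq_inv_mul]
    have hlast : ((k : ℝ) / T) • u = T⁻¹ • ((k : ℝ) • u) := by
      rw [smul_smul, div_eq_inv_mul]
    rw [hsum, hlast, ← smul_add, smul_smul]
    have hc : (1 / (1 - (k : ℝ) / T)) * T⁻¹ = S⁻¹ := by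
      rw [hTdef]
      have hS0 : S ≠ 0 := hSpos.ne'
      field_simp
      ring
      exact mul_inv_cancel₀ hS0
    rw [hc]
    exact hkey2
  refine ⟨?_, hform⟩
  by_cases hex : ∃ i, ystar = x i
  · obtain ⟨i, hi⟩ := hex
    refine ⟨fun j => if j = i then 1 else 0, 0, ?_, ?_, one_pos, ?_, ?_⟩
    · intro j; by_cases h : j = i <;> simp [h]
    · simp
    · simp
    · simp [ite_smul, hi]
  · push_neg at hex
    set a : Fin k → ℝ := fun i => ‖x i - ystar‖⁻¹ with ha
    set S : ℝ := ∑ j, a j with hSdef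
    set T : ℝ := S + k with hTdef
    have hapos : ∀ i, 0 < a i := fun i =>
      inv_pos.mpr (norm_pos_iff.mpr (sub_ne_zero.mpr fun h => hex i h.symm))
    have hSpos : 0 < S :=
      Finset.sum_pos (fun i _ => hapos i) (Finset.univ_nonempty_iff.mpr ⟨⟨0, hk⟩⟩)
    have hknn : (0:ℝ) ≤ k := Nat.cast_nonneg k
    have hTpos : 0 < T := by linarith
    have haleS : ∀ i, a i ≤ S := fun i =>
      Finset.single_le_sum (fun j _ => (hapos j).le) (Finset.mem_univ i)
    refine ⟨fun i => a i / T, (k : ℝ) / T, ?_, ?_, ?_, ?_, ?_⟩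
    · intro i
      constructor
      · exact div_nonneg (hapos i).le hTpos.le
      · rw [div_le_one hTpos]; linarith [haleS i]
    · constructor
      · exact div_nonneg hknn hTpos.le
      · rw [div_le_one hTpos]; linarith
    · rw [div_lt_one hTpos]; linarith
    · rw [← Finset.sum_div, ← hSdef, ← add_div, hTdef, div_self hTpos.ne']
    · exact hform hex
end

section
/- Let X = ℓ¹(ℕ; ℝ) and let u = (u^{(l)})_{l∈ℕ} ∈ ℓ^∞(ℕ; ℝ) with ‖u‖_∞ < 1; for y ∈ ℓ¹ write ⟨u, y⟩ = Σ_l u^{(l)} y^{(l)}. Fix an integer k ≥ 1. (a) For any x_1, …, x_k ∈ ℓ¹ there exists a minimizer over y ∈ ℓ¹ of F(y) = Σ_{i=1}^k (‖x_i − y‖_{ℓ¹} + ⟨u, x_i − y⟩) (a geometric quantile). (b) If |u^{(l)}| ∉ {1 − 2j/k : j = 1, …, ⌊k/2⌋} for every l ∈ ℕ, then for every x_1, …, x_k ∈ ℓ¹ the minimizer is unique; conversely, if |u^{(l)}| ∈ {1 − 2j/k : j = 1, …, ⌊k/2⌋} for some l, then there exist x_1, …, x_k ∈ ℓ¹ for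 which the minimizer is not unique. (c) Under the condition of (b), the geometric quantile map q_u is Lipschitz: for all x_1,…,x_k, z_1,…,z_k ∈ ℓ¹, ‖q_u(x_1,…,x_k) − q_u(z_1,…,z_k)‖_{ℓ¹} ≤ Σ_{i=1}^k ‖x_i − z_i‖_{ℓ¹}. -/
open Finset

section OneD
variable {k : ℕ}

noncomputable def g1 (c : ℝ) (a : Fin k → ℝ) (t : ℝ) : ℝ :=
  ∑ i, (|a i - t| + c * (a i - t))

open Classical in
noncomputable def cardLe (a : Fin k → ℝ) (t : ℝ) : ℕ :=
  (Finset.univ.filter fun i => a i ≤ t).card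

open Classical in
noncomputable def cardLt (a : Fin k → ℝ) (t : ℝ) : ℕ :=
  (Finset.univ.filter fun i => a i < t).card

lemma cardLe_eq (a : Fin k → ℝ) (t : ℝ) [DecidablePred fun i : Fin k => a i ≤ t] :
    cardLe a t = (Finset.univ.filter fun i => a i ≤ t).card := by
  unfold cardLe; congr!

lemma cardLt_eq (a : Fin k → ℝ) (t : ℝ) [DecidablePred fun i : Fin k => a i < t] :
    cardLt a t = (Finset.univ.filter fun i => a i < t).card := by
  unfold cardLt; congr!

lemma cardLe_le (a : Fin k → ℝ) (t : ℝ) : cardLe a t ≤ k := by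
  classical
  rw [cardLe_eq a t]
  exact le_trans (Finset.card_filter_le Finset.univ fun i => a i ≤ t) (by simp)

lemma g1_up (c : ℝ) (a : Fin k → ℝ) {s t : ℝ} (h : s ≤ t) :
    (t - s) * (2 * (cardLe a s : ℝ) - k * (1 + c)) ≤ g1 c a t - g1 c a s := by
  classical
  have hsum : g1 c a t - g1 c a s
      = ∑ i, ((|a i - t| + c * (a i - t)) - (|a i - s| + c * (a i - s))) := by
    rw [g1, g1, ← Finset.sum_sub_distrib]
  have hterm : ∀ i : Fin k,
      (if a i ≤ s then (t - s) else -(t - s)) + c * (s - t)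
        ≤ (|a i - t| + c * (a i - t)) - (|a i - s| + c * (a i - s)) := by
    intro i
    have hre : (|a i - t| + c * (a i - t)) - (|a i - s| + c * (a i - s))
        = (|a i - t| - |a i - s|) + c * (s - t) := by ring
    rw [hre]
    have habs : -(t - s) ≤ |a i - t| - |a i - s| := by
      have h1 : |a i - s| - |a i - t| ≤ |(a i - s) - (a i - t)| := abs_sub_abs_le_abs_sub _ _
      have h2 : (a i - s) - (a i - t) = t - s := by ring
      have h3 : |t - s| = t - s := abs_of_nonneg (by linarith)
      rw [h2, h3] at h1
      linarith
    split_ifs with hi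
    · have h1 : |a i - t| = t - a i := by rw [abs_of_nonpos (by linarith)]; ring
      have h2 : |a i - s| = s - a i := by rw [abs_of_nonpos (by linarith)]; ring
      rw [h1, h2]; linarith
    · linarith
  rw [hsum]
  refine le_trans ?_ (Finset.sum_le_sum fun i _ => hterm i)
  rw [Finset.sum_add_distrib, Finset.sum_ite, Finset.sum_const, Finset.sum_const,
    Finset.sum_const, Finset.card_univ, Fintype.card_fin]
  have htot : (Finset.univ.filter fun i : Fin k => a i ≤ s).card
      + (Finset.univ.filter fun i : Fin k => ¬ a i ≤ s).card = k := by
    simpa using Finset.card_filter_add_card_filter_not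
      (s := (Finset.univ : Finset (Fin k))) (p := fun i : Fin k => a i ≤ s)
  rw [cardLe_eq]
  set N := (Finset.univ.filter fun i : Fin k => a i ≤ s).card with hN
  have hneg : ((Finset.univ.filter fun i : Fin k => ¬ a i ≤ s).card : ℝ) = (k : ℝ) - N := by
    have : (Finset.univ.filter fun i : Fin k => ¬ a i ≤ s).card = k - N := by omega
    rw [this]; push_cast [Nat.cast_sub (by omega : N ≤ k)]; ring
  simp only [nsmul_eq_mul, smul_eq_mul, hneg]
  ring_nf
  rfl

lemma g1_down (c : ℝ) (a : Fin k → ℝ) {s t : ℝ} (h : t ≤ s) :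
    (s - t) * ((k : ℝ) * (1 + c) - 2 * (cardLt a s : ℝ)) ≤ g1 c a t - g1 c a s := by
  classical
  have hsum : g1 c a t - g1 c a s
      = ∑ i, ((|a i - t| + c * (a i - t)) - (|a i - s| + c * (a i - s))) := by
    rw [g1, g1, ← Finset.sum_sub_distrib]
  have hterm : ∀ i : Fin k,
      (if a i < s then -(s - t) else (s - t)) + c * (s - t)
        ≤ (|a i - t| + c * (a i - t)) - (|a i - s| + c * (a i - s)) := by
    intro i
    have hre : (|a i - t| + c * (a i - t)) - (|a i - s| + c * (a i - s))
        = (|a i - t| - |a i - s|) + c * (s - t) := by ring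
    rw [hre]
    have habs : -(s - t) ≤ |a i - t| - |a i - s| := by
      have h1 : |a i - s| - |a i - t| ≤ |(a i - s) - (a i - t)| := abs_sub_abs_le_abs_sub _ _
      have h2 : (a i - s) - (a i - t) = t - s := by ring
      have h3 : |t - s| = s - t := by rw [abs_of_nonpos (by linarith)]; ring
      rw [h2, h3] at h1
      linarith
    split_ifs with hi
    · linarith
    · push_neg at hi
      have h1 : |a i - t| = a i - t := abs_of_nonneg (by linarith)
      have h2 : |a i - s| = a i - s := abs_of_nonneg (by linarith)
      rw [h1, h2]; linarith
  rw [hsum]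
  refine le_trans ?_ (Finset.sum_le_sum fun i _ => hterm i)
  rw [Finset.sum_add_distrib, Finset.sum_ite, Finset.sum_const, Finset.sum_const,
    Finset.sum_const, Finset.card_univ, Fintype.card_fin]
  have htot : (Finset.univ.filter fun i : Fin k => a i < s).card
      + (Finset.univ.filter fun i : Fin k => ¬ a i < s).card = k := by
    simpa using Finset.card_filter_add_card_filter_not
      (s := (Finset.univ : Finset (Fin k))) (p := fun i : Fin k => a i < s)
  rw [cardLt_eq]
  set N := (Finset.univ.filter fun i : Fin k => a i < s).card with hN
  have hneg : ((Finset.univ.filter fun i : Fin k => ¬ a i < s).card : ℝ) = (k : ℝ) - N := by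
    have : (Finset.univ.filter fun i : Fin k => ¬ a i < s).card = k - N := by omega
    rw [this]; push_cast [Nat.cast_sub (by omega : N ≤ k)]; ring
  simp only [nsmul_eq_mul, smul_eq_mul, hneg]
  ring_nf
  rfl

end OneD

section Sel
variable {k : ℕ}

noncomputable def sel (m : ℕ) (a : Fin k → ℝ) : ℝ := sInf {t | m ≤ cardLe a t}

lemma sel_isLeast {m : ℕ} (hm : 1 ≤ m) (hmk : m ≤ k) (a : Fin k → ℝ) :
    IsLeast {t | m ≤ cardLe a t} (sel m a) := by
  classical
  have hk : 0 < k := lt_of_lt_of_le hm hmk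
  have : NeZero k := ⟨by omega⟩
  have hne : (Finset.univ : Finset (Fin k)).Nonempty := Finset.univ_nonempty
  set T : Finset ℝ := Finset.univ.image a with hT
  have hTne : T.Nonempty := hne.image a
  have hmaxmem : T.max' hTne ∈ {t | m ≤ cardLe a t} := by
    have hfil : (Finset.univ.filter fun i : Fin k => a i ≤ T.max' hTne) = Finset.univ := by
      ext i
      simp only [Finset.mem_filter, Finset.mem_univ, true_and, iff_true]
      exact Finset.le_max' T (a i) (Finset.mem_image_of_mem a (Finset.mem_univ i))
    have : cardLe a (T.max' hTne) = k := by
      rw [cardLe_eq, hfil, Finset.card_univ, Fintype.card_fin]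
    simpa [this] using hmk
  set S : Finset ℝ := T.filter (fun t => m ≤ cardLe a t) with hS
  have hSne : S.Nonempty :=
    ⟨T.max' hTne, Finset.mem_filter.mpr ⟨Finset.max'_mem _ _, hmaxmem⟩⟩
  have key : ∀ t, m ≤ cardLe a t → S.min' hSne ≤ t := by
    intro t ht
    have h1 : (Finset.univ.filter fun i : Fin k => a i ≤ t).Nonempty := by
      rw [← Finset.card_pos, ← cardLe_eq]
      omega
    set B : Finset ℝ := (Finset.univ.filter fun i : Fin k => a i ≤ t).image a with hB
    have hBne : B.Nonempty := h1.image a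
    set b := B.max' hBne with hb
    have hbB : b ∈ B := B.max'_mem hBne
    obtain ⟨i₀, hi₀, hib⟩ := Finset.mem_image.mp hbB
    have hbt : b ≤ t := by
      rw [← hib]; exact (Finset.mem_filter.mp hi₀).2
    have hsub : (Finset.univ.filter fun i : Fin k => a i ≤ t)
        ⊆ (Finset.univ.filter fun i : Fin k => a i ≤ b) := by
      intro j hj
      simp only [Finset.mem_filter, Finset.mem_univ, true_and] at hj ⊢
      exact Finset.le_max' B (a j) (Finset.mem_image.mpr ⟨j, by
        simp only [Finset.mem_filter, Finset.mem_univ, true_and]; exact hj, rfl⟩)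
    have hbmem : m ≤ cardLe a b := by
      rw [cardLe_eq]
      calc m ≤ cardLe a t := ht
        _ = (Finset.univ.filter fun i : Fin k => a i ≤ t).card := cardLe_eq a t
        _ ≤ _ := Finset.card_le_card hsub
    have hbS : b ∈ S := by
      refine Finset.mem_filter.mpr ⟨?_, hbmem⟩
      rw [← hib, hT]
      exact Finset.mem_image_of_mem a (Finset.mem_univ i₀)
    exact le_trans (Finset.min'_le S b hbS) hbt
  have hL : IsLeast {t | m ≤ cardLe a t} (S.min' hSne) :=
    ⟨(Finset.mem_filter.mp (S.min'_mem hSne)).2, fun t ht => key t ht⟩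
  rwa [sel, hL.csInf_eq]

lemma sel_mem {m : ℕ} (hm : 1 ≤ m) (hmk : m ≤ k) (a : Fin k → ℝ) :
    m ≤ cardLe a (sel m a) := (sel_isLeast hm hmk a).1

lemma cardLe_lt_of_lt_sel {m : ℕ} (hm : 1 ≤ m) (hmk : m ≤ k) (a : Fin k → ℝ)
    {t : ℝ} (ht : t < sel m a) : cardLe a t < m := by
  by_contra hcon
  push_neg at hcon
  exact absurd ((sel_isLeast hm hmk a).2 hcon) (not_le.mpr ht)

lemma cardLt_sel_lt {m : ℕ} (hm : 1 ≤ m) (hmk : m ≤ k) (a : Fin k → ℝ) :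
    cardLt a (sel m a) < m := by
  classical
  set s := sel m a with hs
  by_cases hne : (Finset.univ.filter fun i : Fin k => a i < s).Nonempty
  · set B : Finset ℝ := (Finset.univ.filter fun i : Fin k => a i < s).image a with hB
    have hBne : B.Nonempty := hne.image a
    set b := B.max' hBne with hb
    have hbB : b ∈ B := B.max'_mem hBne
    obtain ⟨i₀, hi₀, hib⟩ := Finset.mem_image.mp hbB
    have hbs : b < s := by rw [← hib]; exact (Finset.mem_filter.mp hi₀).2
    have hsets : (Finset.univ.filter fun i : Fin k => a i < s)
        = (Finset.univ.filter fun i : Fin k => a i ≤ b) := by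
      ext j
      simp only [Finset.mem_filter, Finset.mem_univ, true_and]
      constructor
      · intro hj
        exact Finset.le_max' B (a j) (Finset.mem_image.mpr ⟨j, by
          simp only [Finset.mem_filter, Finset.mem_univ, true_and]; exact hj, rfl⟩)
      · intro hj; exact lt_of_le_of_lt hj hbs
    have : cardLt a s = cardLe a b := by rw [cardLt_eq, cardLe_eq, hsets]
    rw [this]
    exact cardLe_lt_of_lt_sel hm hmk a hbs
  · have : cardLt a s = 0 := by
      rw [cardLt_eq, Finset.not_nonempty_iff_eq_empty.mp hne, Finset.card_empty]
    omega

lemma sel_le_of_mem {m : ℕ} (hm : 1 ≤ m) (hmk : m ≤ k) (a : Fin k → ℝ)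
    {t : ℝ} (ht : m ≤ cardLe a t) : sel m a ≤ t :=
  (sel_isLeast hm hmk a).2 ht

end Sel

section Min
variable {k : ℕ}

lemma rfacts {c : ℝ} (hc : |c| < 1) (hk : 1 ≤ k) :
    0 < (k : ℝ) * (1 + c) / 2 ∧ (k : ℝ) * (1 + c) / 2 < k := by
  have h1 : -1 < c := by cases' abs_lt.mp hc with h _; linarith
  have h2 : c < 1 := (abs_lt.mp hc).2
  have hkpos : (0 : ℝ) < k := by exact_mod_cast hk
  constructor
  · have : (0:ℝ) < 1 + c := by linarith
    positivity
  · nlinarith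

lemma mfacts {c : ℝ} (hc : |c| < 1) (hk : 1 ≤ k) :
    1 ≤ ⌈(k : ℝ) * (1 + c) / 2⌉₊ ∧ ⌈(k : ℝ) * (1 + c) / 2⌉₊ ≤ k ∧
    (k : ℝ) * (1 + c) / 2 ≤ (⌈(k : ℝ) * (1 + c) / 2⌉₊ : ℝ) ∧
    ((⌈(k : ℝ) * (1 + c) / 2⌉₊ : ℝ) - 1 < (k : ℝ) * (1 + c) / 2) := by
  obtain ⟨hr0, hrk⟩ := rfacts hc hk
  refine ⟨Nat.one_le_iff_ne_zero.mpr ?_, Nat.ceil_le.mpr (le_of_lt hrk), Nat.le_ceil _, ?_⟩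
  · intro h0
    have := Nat.ceil_eq_zero.mp h0
    linarith
  · have := Nat.ceil_lt_add_one (le_of_lt hr0) (R := ℝ) (a := (k : ℝ) * (1 + c) / 2)
    linarith

/-- the selector minimizes `g1`. -/
lemma g1_sel_min {c : ℝ} (hc : |c| < 1) (hk : 1 ≤ k) (a : Fin k → ℝ) (t : ℝ) :
    g1 c a (sel (⌈(k : ℝ) * (1 + c) / 2⌉₊) a) ≤ g1 c a t := by
  obtain ⟨hm1, hmk, hrm, hmr⟩ := mfacts hc hk
  set r : ℝ := (k : ℝ) * (1 + c) / 2 with hr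
  set m : ℕ := ⌈r⌉₊ with hm
  set s := sel m a with hs
  rcases le_total s t with h | h
  · have hb := g1_up c a h
    have hcard : (m : ℝ) ≤ (cardLe a s : ℝ) := by exact_mod_cast sel_mem hm1 hmk a
    nlinarith
  · have hb := g1_down c a h
    have hcard : (cardLt a s : ℝ) ≤ (m : ℝ) - 1 := by
      have h1 : cardLt a s < m := by rw [hs]; exact cardLt_sel_lt hm1 hmk a
      have h2 : cardLt a s ≤ m - 1 := by omega
      have h3 : ((cardLt a s : ℕ) : ℝ) ≤ ((m - 1 : ℕ) : ℝ) := by exact_mod_cast h2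
      rwa [Nat.cast_sub hm1, Nat.cast_one] at h3
    nlinarith

/-- uniqueness of the minimizer when `r` is not an integer. -/
lemma g1_sel_unique {c : ℝ} (hc : |c| < 1) (hk : 1 ≤ k)
    (hr : ∀ n : ℕ, (n : ℝ) ≠ (k : ℝ) * (1 + c) / 2) (a : Fin k → ℝ) (t : ℝ)
    (ht : ∀ z, g1 c a t ≤ g1 c a z) : t = sel (⌈(k : ℝ) * (1 + c) / 2⌉₊) a := by
  obtain ⟨hm1, hmk, hrm, hmr⟩ := mfacts hc hk
  set r : ℝ := (k : ℝ) * (1 + c) / 2 with hrdef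
  set m : ℕ := ⌈r⌉₊ with hm
  set s := sel m a with hs
  have hrm' : r < m := lt_of_le_of_ne hrm ((hr m).symm)
  rcases lt_trichotomy t s with h | h | h
  · exfalso
    have hb := g1_down c a (le_of_lt h)
    have hcard : (cardLt a s : ℝ) ≤ (m : ℝ) - 1 := by
      have h1 : cardLt a s < m := by rw [hs]; exact cardLt_sel_lt hm1 hmk a
      have h2 : cardLt a s ≤ m - 1 := by omega
      have h3 : ((cardLt a s : ℕ) : ℝ) ≤ ((m - 1 : ℕ) : ℝ) := by exact_mod_cast h2
      rwa [Nat.cast_sub hm1, Nat.cast_one] at h3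
    have hpos : 0 < g1 c a t - g1 c a s := by nlinarith
    have := ht s
    linarith
  · exact h
  · exfalso
    have hb := g1_up c a (le_of_lt h)
    have hcard : (m : ℝ) ≤ (cardLe a s : ℝ) := by exact_mod_cast sel_mem hm1 hmk a
    have hpos : 0 < g1 c a t - g1 c a s := by nlinarith
    have := ht s
    linarith

lemma sel_lipschitz {m : ℕ} (hm : 1 ≤ m) (hmk : m ≤ k) (a b : Fin k → ℝ) :
    |sel m a - sel m b| ≤ ∑ i, |a i - b i| := by
  classical
  set d : ℝ := ∑ i, |a i - b i| with hd
  have hid : ∀ i, |a i - b i| ≤ d :=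
    fun i => Finset.single_le_sum (f := fun i => |a i - b i|)
      (fun j _ => abs_nonneg _) (Finset.mem_univ i)
  have key : ∀ (a b : Fin k → ℝ), (∀ i, |a i - b i| ≤ d) → sel m b ≤ sel m a + d := by
    intro a b hab
    apply sel_le_of_mem hm hmk
    have hsub : (Finset.univ.filter fun i : Fin k => a i ≤ sel m a)
        ⊆ (Finset.univ.filter fun i : Fin k => b i ≤ sel m a + d) := by
      intro i hi
      simp only [Finset.mem_filter, Finset.mem_univ, true_and] at hi ⊢
      have h1 : b i - a i ≤ |a i - b i| := by
        rw [abs_sub_comm]; exact le_abs_self _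
      have := hab i
      linarith
    calc m ≤ cardLe a (sel m a) := sel_mem hm hmk a
      _ = _ := cardLe_eq a _
      _ ≤ _ := Finset.card_le_card hsub
      _ = _ := (cardLe_eq b _).symm
  have h1 : sel m b ≤ sel m a + d := key a b hid
  have h2 : sel m a ≤ sel m b + d := key b a (fun i => by rw [abs_sub_comm]; exact hid i)
  rw [abs_le]
  constructor <;> linarith

lemma sel_zero {m : ℕ} (hm : 1 ≤ m) (hmk : m ≤ k) :
    sel m (fun _ : Fin k => (0 : ℝ)) = 0 := by
  classical
  have hL : IsLeast {t | m ≤ cardLe (fun _ : Fin k => (0 : ℝ)) t} 0 := by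
    constructor
    · have : (Finset.univ.filter fun _ : Fin k => (0 : ℝ) ≤ 0) = Finset.univ := by
        simp
      show m ≤ cardLe _ 0
      rw [cardLe_eq, this, Finset.card_univ, Fintype.card_fin]
      exact hmk
    · intro t ht
      by_contra hcon
      push_neg at hcon
      have : (Finset.univ.filter fun _ : Fin k => (0 : ℝ) ≤ t) = ∅ := by
        ext i; simp [not_le.mpr hcon]
      have h0 : cardLe (fun _ : Fin k => (0 : ℝ)) t = 0 := by
        rw [cardLe_eq, this, Finset.card_empty]
      simp only [Set.mem_setOf_eq, h0] at ht
      omega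
  rw [sel, hL.csInf_eq]

lemma g1_zero_min {c : ℝ} (hc : |c| < 1) (t : ℝ) :
    g1 c (fun _ : Fin k => (0 : ℝ)) 0 ≤ g1 c (fun _ : Fin k => (0 : ℝ)) t := by
  unfold g1
  have hterm : ∀ _i : Fin k, (0 : ℝ) ≤ |(0 : ℝ) - t| + c * (0 - t) := by
    intro i
    have h1 : |c * (0 - t)| ≤ |(0 : ℝ) - t| := by
      rw [abs_mul]
      calc |c| * |0 - t| ≤ 1 * |0 - t| :=
        mul_le_mul_of_nonneg_right (le_of_lt hc) (abs_nonneg _)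
        _ = |(0 : ℝ) - t| := one_mul _
    have := neg_abs_le (c * (0 - t))
    linarith
  calc (∑ i : Fin k, (|(0:ℝ) - 0| + c * (0 - 0))) = 0 := by simp
    _ ≤ _ := Finset.sum_nonneg fun i _ => hterm i

end Min

section Plateau
variable {k : ℕ}

lemma card_val_lt {m : ℕ} (h : m ≤ k) :
    ((Finset.univ : Finset (Fin k)).filter fun i : Fin k => (i : ℕ) < m).card = m := by
  have hlt : ∀ n ∈ Finset.range m, n < k := fun n hn => by
    have := Finset.mem_range.mp hn; omega
  have hfil : ((Finset.univ : Finset (Fin k)).filter fun i : Fin k => (i : ℕ) < m)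
      = (Finset.range m).attachFin hlt := by
    ext i
    simp [Finset.mem_attachFin, Finset.mem_range]
  rw [hfil, Finset.card_attachFin, Finset.card_range]

lemma cardLe_seq {n : ℕ} (hn : n ≤ k) :
    cardLe (fun i : Fin k => ((i : ℕ) : ℝ) + 1) (n : ℝ) = n := by
  classical
  rw [cardLe_eq]
  have hfil : ((Finset.univ : Finset (Fin k)).filter fun i : Fin k => ((i : ℕ) : ℝ) + 1 ≤ (n : ℝ))
      = ((Finset.univ : Finset (Fin k)).filter fun i : Fin k => (i : ℕ) < n) := by
    apply Finset.filter_congr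
    intro i _
    constructor
    · intro hi
      have h2 : (i : ℕ) + 1 ≤ n := by exact_mod_cast hi
      omega
    · intro hi
      have h2 : (i : ℕ) + 1 ≤ n := by omega
      exact_mod_cast Nat.cast_le.mpr h2
  rw [hfil, card_val_lt hn]

lemma cardLt_seq {n : ℕ} (hn : n ≤ k + 1) :
    cardLt (fun i : Fin k => ((i : ℕ) : ℝ) + 1) (n : ℝ) = n - 1 := by
  classical
  rw [cardLt_eq]
  have hfil : ((Finset.univ : Finset (Fin k)).filter fun i : Fin k => ((i : ℕ) : ℝ) + 1 < (n : ℝ))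
      = ((Finset.univ : Finset (Fin k)).filter fun i : Fin k => (i : ℕ) < n - 1) := by
    apply Finset.filter_congr
    intro i _
    constructor
    · intro hi
      have h2 : (i : ℕ) + 1 < n := by exact_mod_cast hi
      omega
    · intro hi
      have h2 : (i : ℕ) + 1 < n := by omega
      exact_mod_cast Nat.cast_lt.mpr h2
  rw [hfil, card_val_lt (by omega)]

lemma g1_plateau_left {c : ℝ} {m₀ : ℕ} (h1 : 1 ≤ m₀) (h2 : m₀ < k)
    (hc : (k : ℝ) * (1 + c) = 2 * m₀) (t : ℝ) :
    g1 c (fun i : Fin k => ((i : ℕ) : ℝ) + 1) (m₀ : ℝ)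
      ≤ g1 c (fun i : Fin k => ((i : ℕ) : ℝ) + 1) t := by
  set a : Fin k → ℝ := fun i => ((i : ℕ) : ℝ) + 1 with ha
  rcases le_total ((m₀ : ℝ)) t with h | h
  · have hb := g1_up c a h
    have hcard : (cardLe a (m₀ : ℝ) : ℝ) = m₀ := by
      rw [ha, cardLe_seq (le_of_lt h2)]
    rw [hcard] at hb
    nlinarith
  · have hb := g1_down c a h
    have hcard : (cardLt a (m₀ : ℝ) : ℝ) = (m₀ : ℝ) - 1 := by
      rw [ha, cardLt_seq (by omega)]
      rw [Nat.cast_sub h1, Nat.cast_one]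
    rw [hcard] at hb
    nlinarith

lemma g1_plateau_right {c : ℝ} {m₀ : ℕ} (h1 : 1 ≤ m₀) (h2 : m₀ < k)
    (hc : (k : ℝ) * (1 + c) = 2 * m₀) (t : ℝ) :
    g1 c (fun i : Fin k => ((i : ℕ) : ℝ) + 1) ((m₀ : ℝ) + 1)
      ≤ g1 c (fun i : Fin k => ((i : ℕ) : ℝ) + 1) t := by
  set a : Fin k → ℝ := fun i => ((i : ℕ) : ℝ) + 1 with ha
  have hcast : ((m₀ : ℝ) + 1) = ((m₀ + 1 : ℕ) : ℝ) := by push_cast; ring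
  rcases le_total ((m₀ : ℝ) + 1) t with h | h
  · have hb := g1_up c a h
    have hcard : (cardLe a ((m₀ : ℝ) + 1) : ℝ) = (m₀ : ℝ) + 1 := by
      rw [ha, hcast, cardLe_seq (by omega)]
    rw [hcard] at hb
    nlinarith
  · have hb := g1_down c a h
    have hcard : (cardLt a ((m₀ : ℝ) + 1) : ℝ) = (m₀ : ℝ) := by
      rw [ha, hcast, cardLt_seq (by omega), Nat.add_sub_cancel]
    rw [hcard] at hb
    nlinarith

end Plateau

/-- The dual pairing `⟨u, v⟩ = ∑_l u l * v l` of `u ∈ ℓ∞` with `v ∈ ℓ¹`. -/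
noncomputable def ellOnePair (u : lp (fun _ : ℕ => ℝ) ⊤) (v : lp (fun _ : ℕ => ℝ) 1) : ℝ :=
  ∑' l : ℕ, u l * v l

/-- The geometric quantile objective `F(y) = ∑ i (‖x i − y‖₁ + ⟨u, x i − y⟩)` on `ℓ¹`. -/
noncomputable def ellOneF {k : ℕ} (u : lp (fun _ : ℕ => ℝ) ⊤)
    (x : Fin k → lp (fun _ : ℕ => ℝ) 1) (y : lp (fun _ : ℕ => ℝ) 1) : ℝ :=
  ∑ i, (‖x i - y‖ + ellOnePair u (x i - y))

section Plumbing

variable {k : ℕ} (u : lp (fun _ : ℕ => ℝ) ⊤)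

lemma abs_coord_lt (hu : ‖u‖ < 1) (l : ℕ) : |u l| < 1 := by
  have h := lp.norm_apply_le_norm ENNReal.top_ne_zero u l
  rw [Real.norm_eq_abs] at h
  linarith

lemma hasSum_abs (v : lp (fun _ : ℕ => ℝ) 1) : HasSum (fun l => |v l|) ‖v‖ := by
  have h := lp.hasSum_norm (p := 1) (by norm_num) v
  simpa [Real.norm_eq_abs] using h

lemma hasSum_pair (v : lp (fun _ : ℕ => ℝ) 1) :
    HasSum (fun l => u l * v l) (ellOnePair u v) := by
  have hs : Summable (fun l => u l * v l) := by
    apply Summable.of_norm_bounded (g := fun l => ‖u‖ * |v l|)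
      (((hasSum_abs v).summable).mul_left ‖u‖)
    intro l
    rw [norm_mul, Real.norm_eq_abs, Real.norm_eq_abs]
    apply mul_le_mul_of_nonneg_right _ (abs_nonneg _)
    have h := lp.norm_apply_le_norm ENNReal.top_ne_zero u l
    rwa [Real.norm_eq_abs] at h
  exact hs.hasSum

lemma hasSum_G (x : Fin k → lp (fun _ : ℕ => ℝ) 1) (y : lp (fun _ : ℕ => ℝ) 1) :
    HasSum (fun l => g1 (u l) (fun i => x i l) (y l)) (ellOneF u x y) := by
  have hi : ∀ i : Fin k, HasSum (fun l => |x i l - y l| + u l * (x i l - y l))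
      (‖x i - y‖ + ellOnePair u (x i - y)) := by
    intro i
    have h1 := hasSum_abs (x i - y)
    have h2 := hasSum_pair u (x i - y)
    have hco : ∀ l, (x i - y) l = x i l - y l := by
      intro l
      rw [lp.coeFn_sub, Pi.sub_apply]
    simp only [hco] at h1 h2
    exact h1.add h2
  have h := hasSum_sum (fun i (_ : i ∈ Finset.univ) => hi i)
  simpa [g1, ellOneF] using h

lemma min_of_coordwise (x : Fin k → lp (fun _ : ℕ => ℝ) 1) (y : lp (fun _ : ℕ => ℝ) 1)
    (h : ∀ l t, g1 (u l) (fun i => x i l) (y l) ≤ g1 (u l) (fun i => x i l) t) :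
    ∀ z, ellOneF u x y ≤ ellOneF u x z := fun z =>
  hasSum_le (fun l => h l (z l)) (hasSum_G u x y) (hasSum_G u x z)

lemma coordwise_of_min (x : Fin k → lp (fun _ : ℕ => ℝ) 1) (y : lp (fun _ : ℕ => ℝ) 1)
    (hy : ∀ z, ellOneF u x y ≤ ellOneF u x z) (l : ℕ) (t : ℝ) :
    g1 (u l) (fun i => x i l) (y l) ≤ g1 (u l) (fun i => x i l) t := by
  classical
  set z : lp (fun _ : ℕ => ℝ) 1 := y + lp.single 1 l (t - y l) with hz
  have hzco : ∀ l', z l' = if l' = l then t else y l' := by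
    intro l'
    rw [hz, lp.coeFn_add, Pi.add_apply]
    by_cases h : l' = l
    · subst h
      rw [lp.single_apply_self, if_pos rfl]
      ring
    · rw [lp.single_apply_ne 1 l _ h, if_neg h, add_zero]
  have hGz : (fun l' => g1 (u l') (fun i => x i l') (z l'))
      = Function.update (fun l' => g1 (u l') (fun i => x i l') (y l')) l
          (g1 (u l) (fun i => x i l) t) := by
    funext l'
    by_cases h : l' = l
    · subst h
      rw [Function.update_self]
      congr 1
      rw [hzco l', if_pos rfl]
    · rw [Function.update_of_ne h]
      congr 1
      rw [hzco l', if_neg h]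
  have h1 := hasSum_G u x y
  have h2 := h1.update l (g1 (u l) (fun i => x i l) t)
  have h3 := hasSum_G u x z
  rw [hGz] at h3
  have heq := h3.unique h2
  have h4 := hy z
  rw [heq] at h4
  linarith

lemma memℓp_sel (hu : ‖u‖ < 1) (hk : 1 ≤ k) (x : Fin k → lp (fun _ : ℕ => ℝ) 1) :
    Memℓp (fun l => sel (⌈(k : ℝ) * (1 + u l) / 2⌉₊) (fun i => x i l)) 1 := by
  apply memℓp_gen
  simp only [ENNReal.toReal_one, Real.rpow_one, Real.norm_eq_abs]
  have hsumm : Summable (fun l => ∑ i : Fin k, |x i l|) :=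
    summable_sum fun i (_ : i ∈ Finset.univ) => (hasSum_abs (x i)).summable
  refine Summable.of_nonneg_of_le (fun l => abs_nonneg _) (fun l => ?_) hsumm
  · 
    obtain ⟨hm1, hmk, _, _⟩ := mfacts (abs_coord_lt u hu l) hk
    have h := sel_lipschitz hm1 hmk (fun i => x i l) (fun _ => 0)
    rw [sel_zero hm1 hmk] at h
    simpa using h

noncomputable def qmap (hu : ‖u‖ < 1) (hk : 1 ≤ k)
    (x : Fin k → lp (fun _ : ℕ => ℝ) 1) : lp (fun _ : ℕ => ℝ) 1 :=
  ⟨fun l => sel (⌈(k : ℝ) * (1 + u l) / 2⌉₊) (fun i => x i l), memℓp_sel u hu hk x⟩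

lemma qmap_coord (hu : ‖u‖ < 1) (hk : 1 ≤ k) (x : Fin k → lp (fun _ : ℕ => ℝ) 1) (l : ℕ) :
    (qmap u hu hk x) l = sel (⌈(k : ℝ) * (1 + u l) / 2⌉₊) (fun i => x i l) := rfl

lemma qmap_min (hu : ‖u‖ < 1) (hk : 1 ≤ k) (x : Fin k → lp (fun _ : ℕ => ℝ) 1) :
    ∀ z, ellOneF u x (qmap u hu hk x) ≤ ellOneF u x z := by
  apply min_of_coordwise
  intro l t
  rw [qmap_coord]
  exact g1_sel_min (abs_coord_lt u hu l) hk _ t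

lemma qmap_lip (hu : ‖u‖ < 1) (hk : 1 ≤ k) (x z : Fin k → lp (fun _ : ℕ => ℝ) 1) :
    ‖qmap u hu hk x - qmap u hu hk z‖ ≤ ∑ i, ‖x i - z i‖ := by
  have h1 := hasSum_abs (qmap u hu hk x - qmap u hu hk z)
  have h2 : HasSum (fun l => ∑ i, |x i l - z i l|) (∑ i, ‖x i - z i‖) := by
    apply hasSum_sum
    intro i _
    have h := hasSum_abs (x i - z i)
    have hco : ∀ l, (x i - z i) l = x i l - z i l := by
      intro l; rw [lp.coeFn_sub, Pi.sub_apply]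
    simpa only [hco] using h
  refine hasSum_le (fun l => ?_) h1 h2
  have hco : (qmap u hu hk x - qmap u hu hk z) l
      = sel (⌈(k : ℝ) * (1 + u l) / 2⌉₊) (fun i => x i l)
        - sel (⌈(k : ℝ) * (1 + u l) / 2⌉₊) (fun i => z i l) := by
    rw [lp.coeFn_sub, Pi.sub_apply, qmap_coord, qmap_coord]
  rw [hco]
  obtain ⟨hm1, hmk, _, _⟩ := mfacts (abs_coord_lt u hu l) hk
  exact sel_lipschitz hm1 hmk _ _

lemma qmap_unique (hu : ‖u‖ < 1) (hk : 1 ≤ k)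
    (hint : ∀ l (n : ℕ), (n : ℝ) ≠ (k : ℝ) * (1 + u l) / 2)
    (x : Fin k → lp (fun _ : ℕ => ℝ) 1) (y : lp (fun _ : ℕ => ℝ) 1)
    (hy : ∀ z, ellOneF u x y ≤ ellOneF u x z) : y = qmap u hu hk x := by
  apply Subtype.ext
  funext l
  have h := coordwise_of_min u x y hy l
  have := g1_sel_unique (abs_coord_lt u hu l) hk (hint l) (fun i => x i l) (y l) h
  rw [this]
  rfl

end Plumbing

section Assemble

variable {k : ℕ} (u : lp (fun _ : ℕ => ℝ) ⊤)

lemma hint_of_hyp (hu : ‖u‖ < 1) (hk : 1 ≤ k)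
    (h : ∀ l j : ℕ, 1 ≤ j → j ≤ k / 2 → |u l| ≠ 1 - 2 * (j : ℝ) / k) :
    ∀ l (n : ℕ), (n : ℝ) ≠ (k : ℝ) * (1 + u l) / 2 := by
  intro l n hn
  have hkpos : (0 : ℝ) < k := by exact_mod_cast hk
  have hc := abs_coord_lt u hu l
  obtain ⟨hc1, hc2⟩ := abs_lt.mp hc
  set c := u l with hcdef
  have h2 : 2 * (n : ℝ) = (k : ℝ) * (1 + c) := by rw [hn]; ring
  have hn0 : 0 < n := by
    by_contra h0
    push_neg at h0
    have hn00 : n = 0 := by omega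
    rw [hn00] at h2
    norm_num at h2
    rcases h2 with h2 | h2
    · omega
    · linarith
  have hnk : n < k := by
    have : (n : ℝ) < k := by nlinarith
    exact_mod_cast this
  rcases le_or_gt (2 * n) k with hle | hlt
  · have hler : 2 * (n : ℝ) ≤ k := by exact_mod_cast hle
    have hcneg : c ≤ 0 := by nlinarith
    have habs : |c| = 1 - 2 * (n : ℝ) / k := by
      rw [abs_of_nonpos hcneg]
      field_simp
      linarith
    exact h l n hn0 (by omega) habs
  · have hler : (k : ℝ) ≤ 2 * n := by
      have : k ≤ 2 * n := le_of_lt hlt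
      exact_mod_cast this
    have hcpos : 0 ≤ c := by nlinarith
    have hcast : ((k - n : ℕ) : ℝ) = (k : ℝ) - n := by
      rw [Nat.cast_sub (by omega)]
    have habs : |c| = 1 - 2 * ((k - n : ℕ) : ℝ) / k := by
      rw [abs_of_nonneg hcpos, hcast]
      field_simp
      linarith
    exact h l (k - n) (by omega) (by omega) habs

lemma plateau_construct (hu : ‖u‖ < 1) (l : ℕ) (m₀ : ℕ)
    (hm1 : 1 ≤ m₀) (hm2 : m₀ < k) (hceq : (k : ℝ) * (1 + u l) = 2 * m₀) :
    ∃ (x : Fin k → lp (fun _ : ℕ => ℝ) 1) (y₁ y₂ : lp (fun _ : ℕ => ℝ) 1),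
      y₁ ≠ y₂ ∧ (∀ z, ellOneF u x y₁ ≤ ellOneF u x z) ∧
      (∀ z, ellOneF u x y₂ ≤ ellOneF u x z) := by
  refine ⟨fun i => lp.single 1 l (((i : ℕ) : ℝ) + 1),
    lp.single 1 l ((m₀ : ℕ) : ℝ), lp.single 1 l (((m₀ : ℕ) : ℝ) + 1), ?_, ?_, ?_⟩
  · intro hcontra
    have h0 := congrArg (fun v : lp (fun _ : ℕ => ℝ) 1 => v l) hcontra
    simp only [lp.single_apply_self] at h0
    linarith
  · apply min_of_coordwise
    intro l' t
    by_cases hl : l' = l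
    · subst hl
      simp only [lp.single_apply_self]
      exact g1_plateau_left hm1 hm2 hceq t
    · simp only [lp.single_apply_ne 1 l _ hl]
      exact g1_zero_min (abs_coord_lt u hu l') t
  · apply min_of_coordwise
    intro l' t
    by_cases hl : l' = l
    · subst hl
      simp only [lp.single_apply_self]
      exact g1_plateau_right hm1 hm2 hceq t
    · simp only [lp.single_apply_ne 1 l _ hl]
      exact g1_zero_min (abs_coord_lt u hu l') t

end Assemble

/-- Geometric quantiles on `ℓ¹`: (a) existence; (b) uniqueness holds for every data
tuple iff no coordinate `|u l|` lies in `{1 − 2j/k : j = 1, …, ⌊k/2⌋}`; (c) under that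
condition the geometric quantile map is 1-Lipschitz for the `ℓ¹`-product norm. -/
theorem stmt17 (k : ℕ) (hk : 1 ≤ k)
    (u : lp (fun _ : ℕ => ℝ) ⊤) (hu : ‖u‖ < 1) :
    (∀ x : Fin k → lp (fun _ : ℕ => ℝ) 1,
      ∃ y, ∀ z, ellOneF u x y ≤ ellOneF u x z) ∧
    ((∀ l j : ℕ, 1 ≤ j → j ≤ k / 2 → |u l| ≠ 1 - 2 * (j : ℝ) / k) →
      ∀ x : Fin k → lp (fun _ : ℕ => ℝ) 1,
        ∃! y, ∀ z, ellOneF u x y ≤ ellOneF u x z) ∧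
    ((∃ l j : ℕ, 1 ≤ j ∧ j ≤ k / 2 ∧ |u l| = 1 - 2 * (j : ℝ) / k) →
      ∃ (x : Fin k → lp (fun _ : ℕ => ℝ) 1) (y₁ y₂ : lp (fun _ : ℕ => ℝ) 1),
        y₁ ≠ y₂ ∧ (∀ z, ellOneF u x y₁ ≤ ellOneF u x z) ∧
        (∀ z, ellOneF u x y₂ ≤ ellOneF u x z)) ∧
    ((∀ l j : ℕ, 1 ≤ j → j ≤ k / 2 → |u l| ≠ 1 - 2 * (j : ℝ) / k) →
      ∃ q : (Fin k → lp (fun _ : ℕ => ℝ) 1) → lp (fun _ : ℕ => ℝ) 1,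
        (∀ x, {y | ∀ z, ellOneF u x y ≤ ellOneF u x z} = {q x}) ∧
        ∀ x z : Fin k → lp (fun _ : ℕ => ℝ) 1,
          ‖q x - q z‖ ≤ ∑ i, ‖x i - z i‖) := by
  refine ⟨?_, ?_, ?_, ?_⟩
  · intro x
    exact ⟨qmap u hu hk x, qmap_min u hu hk x⟩
  · intro h x
    refine ⟨qmap u hu hk x, qmap_min u hu hk x, fun y hy => ?_⟩
    exact qmap_unique u hu hk (hint_of_hyp u hu hk h) x y hy
  · rintro ⟨l, j, hj1, hj2, hc⟩
    have hk2 : 2 ≤ k := by omega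
    have h2j : 2 * j ≤ k := by omega
    have hkpos : (0 : ℝ) < k := by positivity
    have hrhs : (0 : ℝ) ≤ 1 - 2 * (j : ℝ) / k := by
      rw [sub_nonneg, div_le_one hkpos]
      exact_mod_cast h2j
    have hjk : (j : ℝ) ≤ (k : ℝ) := by exact_mod_cast (by omega : j ≤ k)
    rcases (abs_eq hrhs).mp hc with hcc | hcc
    · refine plateau_construct u hu l (k - j) (by omega) (by omega) ?_
      have hcast : ((k - j : ℕ) : ℝ) = (k : ℝ) - j := Nat.cast_sub (by omega)
      rw [hcc, hcast]
      field_simp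
      ring
    · refine plateau_construct u hu l j hj1 (by omega) ?_
      rw [hcc]
      field_simp
      ring
  · intro h
    refine ⟨qmap u hu hk, fun x => ?_, qmap_lip u hu hk⟩
    apply Set.eq_singleton_iff_unique_mem.mpr
    exact ⟨qmap_min u hu hk x,
      fun y hy => qmap_unique u hu hk (hint_of_hyp u hu hk h) x y hy⟩
end
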